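/- arXiv:math/0603449 — 11 statements merged into one kernel-verified Lean document; each statement's English description precedes it below -/
import Mathlib

section
/- Let Q be a compact Hausdorff space, B ⊆ C(Q) a (not necessarily closed) subalgebra of continuous complex-valued functions, and μ a regular Borel probability measure on Q with supp μ = Q. If E : B → B is an algebra endomorphism that is bounded as a linear operator with respect to the L²(Q,μ)-norm, then E is bounded with respect to the sup-norm with operator norm at most 1, i.e. ‖Ef‖_∞ ≤ ‖f‖_∞ for all f ∈ B. -/
open MeasureTheory

/-- An algebra endomorphism of a subalgebra of `C(Q)` that is bounded with respect to the
`L²(Q,μ)`-norm (for a fully supported regular Borel probability measure `μ`) is a contraction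
with respect to the sup-norm. -/
theorem stmt_0 {Q : Type*} [TopologicalSpace Q] [CompactSpace Q] [T2Space Q]
    [MeasurableSpace Q] [BorelSpace Q]
    (μ : Measure Q) [IsProbabilityMeasure μ] [μ.Regular] [μ.IsOpenPosMeasure]
    (B : Subalgebra ℂ C(Q, ℂ))
    (E : B →ₐ[ℂ] B)
    (K : ℝ)
    (hE : ∀ f : B, eLpNorm (fun x => ((E f : C(Q, ℂ)) x)) 2 μ
        ≤ ENNReal.ofReal K * eLpNorm (fun x => ((f : C(Q, ℂ)) x)) 2 μ) :
    ∀ f : B, ‖(E f : C(Q, ℂ))‖ ≤ ‖(f : C(Q, ℂ))‖ := by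
  intro f
  by_contra h
  push_neg at h
  set a := ‖(f : C(Q, ℂ))‖ with ha
  set b := ‖(E f : C(Q, ℂ))‖ with hb
  have hab : a < b := h
  set c := (a + b) / 2 with hc
  have hac : a < c := by rw [hc]; linarith
  have hcb : c < b := by rw [hc]; linarith
  have hc0 : 0 < c := lt_of_le_of_lt (norm_nonneg _) hac
  obtain ⟨x₀, hx₀⟩ : ∃ x, c < ‖(E f : C(Q, ℂ)) x‖ := by
    by_contra hx
    push_neg at hx
    exact absurd (((E f : C(Q, ℂ))).norm_le hc0.le |>.mpr hx) (not_le.mpr hcb)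
  set U := {x | c < ‖(E f : C(Q, ℂ)) x‖} with hU
  have hUopen : IsOpen U := isOpen_lt continuous_const ((E f : C(Q, ℂ)).continuous.norm)
  have hUne : U.Nonempty := ⟨x₀, hx₀⟩
  have hUpos : 0 < μ U := hUopen.measure_pos μ hUne
  have hUmeas : MeasurableSet U := hUopen.measurableSet
  set Φ := μ U ^ (1 / (2:ℝ)) with hΦ
  have hΦpos : 0 < Φ := ENNReal.rpow_pos hUpos (measure_ne_top μ U)
  have hΦtop : Φ ≠ ⊤ := ENNReal.rpow_ne_top_of_nonneg (by norm_num) (measure_ne_top μ U)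
  set t := Φ.toReal with htdef
  have ht : 0 < t := ENNReal.toReal_pos hΦpos.ne' hΦtop
  set K' := max K 0 with hK'
  have hK'0 : 0 ≤ K' := le_max_right _ _
  have hratio : a / c < 1 := (div_lt_one hc0).mpr hac
  have hratio0 : 0 ≤ a / c := div_nonneg (norm_nonneg _) hc0.le
  obtain ⟨n, hn⟩ := exists_pow_lt_of_lt_one
    (div_pos ht (by positivity : (0:ℝ) < K' + 1)) hratio
  -- the key inequality, for this n
  have h1 : eLpNorm (U.indicator fun _ => (c ^ n : ℝ)) 2 μ = ENNReal.ofReal (c ^ n) * Φ := by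
    rw [eLpNorm_indicator_const hUmeas (by norm_num) (by norm_num)]
    congr 1
    rw [Real.enorm_eq_ofReal (by positivity)]
  have hEpow : ∀ x : Q, ((E (f ^ n) : C(Q, ℂ)) x) = ((E f : C(Q, ℂ)) x) ^ n := by
    intro x
    rw [map_pow]
    simp
  have h2 : eLpNorm (U.indicator fun _ => (c ^ n : ℝ)) 2 μ
      ≤ eLpNorm (fun x => ((E (f ^ n) : C(Q, ℂ)) x)) 2 μ := by
    refine eLpNorm_mono_ae (Filter.Eventually.of_forall fun x => ?_)
    by_cases hx : x ∈ U
    · rw [Set.indicator_of_mem hx, hEpow x, Real.norm_eq_abs,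
        abs_of_nonneg (by positivity), norm_pow]
      exact pow_le_pow_left₀ hc0.le (le_of_lt hx) n
    · simp [Set.indicator_of_notMem hx]
  have h3 := hE (f ^ n)
  have h4 : eLpNorm (fun x => (((f ^ n : B) : C(Q, ℂ)) x)) 2 μ ≤ ENNReal.ofReal (a ^ n) := by
    have hb : ∀ᵐ x ∂μ, ‖((f ^ n : B) : C(Q, ℂ)) x‖ ≤ a ^ n := by
      refine Filter.Eventually.of_forall fun x => ?_
      have : (((f ^ n : B) : C(Q, ℂ)) x) = ((f : C(Q, ℂ)) x) ^ n := by simp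
      rw [this, norm_pow]
      exact pow_le_pow_left₀ (norm_nonneg _) ((f : C(Q, ℂ)).norm_coe_le_norm x) n
    calc eLpNorm (fun x => (((f ^ n : B) : C(Q, ℂ)) x)) 2 μ
        ≤ μ Set.univ ^ (2:ENNReal).toReal⁻¹ * ENNReal.ofReal (a ^ n) :=
          eLpNorm_le_of_ae_bound hb
      _ = ENNReal.ofReal (a ^ n) := by simp
  have key : ENNReal.ofReal (c ^ n) * Φ ≤ ENNReal.ofReal K' * ENNReal.ofReal (a ^ n) := by
    calc ENNReal.ofReal (c ^ n) * Φ
        = eLpNorm (U.indicator fun _ => (c ^ n : ℝ)) 2 μ := h1.symm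
      _ ≤ eLpNorm (fun x => ((E (f ^ n) : C(Q, ℂ)) x)) 2 μ := h2
      _ ≤ ENNReal.ofReal K * eLpNorm (fun x => (((f ^ n : B) : C(Q, ℂ)) x)) 2 μ := h3
      _ ≤ ENNReal.ofReal K' * ENNReal.ofReal (a ^ n) :=
          mul_le_mul' (ENNReal.ofReal_le_ofReal (le_max_left _ _)) h4
  -- pass to real numbers
  have keyR : c ^ n * t ≤ K' * a ^ n := by
    have hRHS : ENNReal.ofReal K' * ENNReal.ofReal (a ^ n) ≠ ⊤ :=
      ENNReal.mul_ne_top ENNReal.ofReal_ne_top ENNReal.ofReal_ne_top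
    have := ENNReal.toReal_mono hRHS key
    rwa [ENNReal.toReal_mul, ENNReal.toReal_mul, ENNReal.toReal_ofReal (by positivity),
      ENNReal.toReal_ofReal hK'0, ENNReal.toReal_ofReal (by positivity)] at this
  -- derive the contradiction
  have han : a ^ n = (a / c) ^ n * c ^ n := by
    rw [div_pow, div_mul_cancel₀]
    positivity
  have h5 : t ≤ K' * (a / c) ^ n := by
    have hcpow : 0 < c ^ n := pow_pos hc0 n
    rw [han] at keyR
    nlinarith [mul_pos hcpow ht]
  have h6 : (a / c) ^ n * (K' + 1) < t := (lt_div_iff₀ (by positivity)).mp hn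
  have h7 : K' * (a / c) ^ n ≤ (a / c) ^ n * (K' + 1) := by
    have h8 : 0 ≤ (a / c) ^ n := pow_nonneg hratio0 n
    nlinarith
  linarith
end

section
/- Let Q be a compact Hausdorff space, μ a regular Borel probability measure with full support, Λ a commutative (multiplicative) semigroup, and B ⊆ C(Q) a subalgebra graded by Λ: B = Σ_{t∈Λ} B_t (algebraic sum), B_t · B_r ⊆ B_{tr}, and B_t ⊥ B_r in L²(Q,μ) for t ≠ r. Let χ : Λ → closed unit disc be a semigroup homomorphism and define E : B → B linearly by Ef = χ(t)f for f ∈ B_t. Then E is an endomorphism of B and ‖Ef‖_∞ ≤ ‖f‖_∞ for all f ∈ B. -/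
/-!
On each graded piece `E` is multiplication by a scalar of modulus at most one, so by Pythagoras
in `L²(μ)` the map `E` is an `L²`-contraction on `B`; it is multiplicative because `χ` is.
Hence `‖(E f)^n‖₂ = ‖E (f^n)‖₂ ≤ ‖f^n‖₂ ≤ ‖f‖^n` for all `n ≥ 1`. If `‖E f‖ > r > ‖f‖`, the open
set `U = {r < |E f|}` has positive measure since `μ` has full support, and
`μ(U) r^(2n) ≤ ‖(E f)^n‖₂² ≤ ‖f‖^(2n)` fails for large `n`.
-/

open MeasureTheory Filter Topology ComplexConjugate

theorem le_of_eventually_mul_pow_le_pow {m a b : ℝ} (hm : 0 < m) (hb : 0 ≤ b)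
    (h : ∀ᶠ n in atTop, m * a ^ n ≤ b ^ n) : a ≤ b := by
  by_contra! hba
  have ha : 0 < a := hb.trans_lt hba
  have hlim : Tendsto (fun n => (b / a) ^ n) atTop (𝓝 0) :=
    tendsto_pow_atTop_nhds_zero_of_lt_one (by positivity) ((div_lt_one ha).2 hba)
  obtain ⟨n, hmn, hlt⟩ := (h.and (hlim.eventually (gt_mem_nhds hm))).exists
  rw [div_pow, div_lt_iff₀ (by positivity)] at hlt
  linarith

theorem LinearMap.eqOn_iSup₂ {R M N P ι κ : Type*} [CommSemiring R] [AddCommMonoid M]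
    [AddCommMonoid N] [AddCommMonoid P] [Module R M] [Module R N] [Module R P]
    {p : ι → Submodule R M} {q : κ → Submodule R N} {φ ψ : M →ₗ[R] N →ₗ[R] P}
    (h : ∀ i j, ∀ x ∈ p i, ∀ y ∈ q j, φ x y = ψ x y) {x : M} (hx : x ∈ ⨆ i, p i)
    {y : N} (hy : y ∈ ⨆ j, q j) : φ x y = ψ x y := by
  have hq : ∀ x, (∀ j, ∀ y ∈ q j, φ x y = ψ x y) → ⨆ j, q j ≤ eqLocus (φ x) (ψ x) :=
    fun x hx => iSup_le fun j y hy => hx j y hy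
  have hp : ⨆ i, p i ≤ eqLocus (φ.compl₂ (⨆ j, q j).subtype) (ψ.compl₂ (⨆ j, q j).subtype) :=
    iSup_le fun i x hx => LinearMap.ext fun y => hq x (h i · x hx) y.2
  exact LinearMap.congr_fun (hp hx) ⟨y, hy⟩

section Graded

variable {R A Λ : Type*} [CommSemiring R] [Semiring A] [Algebra R A]
  {B : Λ → Submodule R A}

theorem Submodule.iSup_mul_iSup_le [Mul Λ]
    (hmul : ∀ t r, ∀ f ∈ B t, ∀ g ∈ B r, f * g ∈ B (t * r)) :
    (⨆ t, B t) * (⨆ t, B t) ≤ ⨆ t, B t := by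
  rw [Submodule.iSup_mul]
  refine iSup_le fun t => ?_
  rw [Submodule.mul_iSup]
  exact iSup_le fun r => Submodule.mul_le.2 fun f hf g hg => le_iSup B (t * r) (hmul t r f hf g hg)

theorem LinearMap.map_mul_iSup_of_map_mul (E : A →ₗ[R] A)
    (hE : ∀ t r, ∀ f ∈ B t, ∀ g ∈ B r, E (f * g) = E f * E g)
    {f : A} (hf : f ∈ ⨆ t, B t) {g : A} (hg : g ∈ ⨆ t, B t) : E (f * g) = E f * E g :=
  LinearMap.eqOn_iSup₂ (φ := (LinearMap.mul R A).compr₂ E)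
    (ψ := (LinearMap.mul R A).compl₁₂ E E) hE hf hg

end Graded

theorem OrthogonalFamily.norm_sum_smul_le {ι 𝕜 V : Type*} [RCLike 𝕜] [NormedAddCommGroup V]
    [InnerProductSpace 𝕜 V] {K : ι → Submodule 𝕜 V}
    (hK : OrthogonalFamily 𝕜 (fun i => K i) fun i => (K i).subtypeₗᵢ) {v : ι → V}
    (hv : ∀ i, v i ∈ K i) {a : ι → 𝕜} (ha : ∀ i, ‖a i‖ ≤ 1) (s : Finset ι) :
    ‖∑ i ∈ s, a i • v i‖ ≤ ‖∑ i ∈ s, v i‖ := by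
  have hsum_smul := hK.norm_sum (fun i => ⟨a i • v i, (K i).smul_mem _ (hv i)⟩) s
  have hsum := hK.norm_sum (fun i => ⟨v i, hv i⟩) s
  simp only [Submodule.coe_subtypeₗᵢ, Submodule.coe_subtype, Submodule.coe_norm] at hsum_smul hsum
  refine (pow_le_pow_iff_left₀ (norm_nonneg _) (norm_nonneg _) two_ne_zero).1 ?_
  rw [hsum_smul, hsum]
  gcongr with i
  rw [norm_smul]
  exact mul_le_of_le_one_left (norm_nonneg _) (ha i)

namespace ContinuousMap

variable {Q 𝕜 : Type*} [TopologicalSpace Q] [CompactSpace Q] [MeasurableSpace Q] [BorelSpace Q]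
  [RCLike 𝕜] (μ : Measure Q) [IsFiniteMeasure μ]

theorem norm_toLp_two_sq (f : C(Q, 𝕜)) : ‖toLp 2 μ 𝕜 f‖ ^ 2 = ∫ x, ‖f x‖ ^ 2 ∂μ := by
  rw [@norm_sq_eq_re_inner 𝕜, ContinuousMap.inner_toLp]
  simp_rw [RCLike.mul_conj, ← RCLike.ofReal_pow, integral_ofReal, RCLike.ofReal_re]

theorem measureReal_mul_sq_le_norm_toLp_sq {U : Set Q} (hU : MeasurableSet U) {c : ℝ}
    (hc : 0 ≤ c) {f : C(Q, 𝕜)} (hf : ∀ x ∈ U, c ≤ ‖f x‖) :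
    μ.real U * c ^ 2 ≤ ‖toLp 2 μ 𝕜 f‖ ^ 2 := by
  have hint : Integrable (fun x => ‖f x‖ ^ 2) μ :=
    (f.continuous.norm.pow 2).integrable_of_hasCompactSupport (.of_compactSpace _)
  rw [norm_toLp_two_sq]
  calc μ.real U * c ^ 2 ≤ ∫ x in U, ‖f x‖ ^ 2 ∂μ :=
        setIntegral_ge_of_const_le hU (measure_ne_top μ U)
          (fun x hx => pow_le_pow_left₀ hc (hf x hx) 2) hint.integrableOn
    _ ≤ ∫ x, ‖f x‖ ^ 2 ∂μ := setIntegral_le_integral hint (.of_forall fun x => by positivity)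

theorem norm_le_of_eventually_norm_toLp_pow_le [μ.IsOpenPosMeasure] (g : C(Q, 𝕜)) {b : ℝ}
    (hb : 0 ≤ b) (h : ∀ᶠ n in atTop, ‖toLp 2 μ 𝕜 (g ^ n)‖ ≤ b ^ n) : ‖g‖ ≤ b := by
  refine le_of_forall_lt_imp_le_of_dense fun r hr => ?_
  rcases le_or_gt r 0 with hr0 | hr0
  · exact hr0.trans hb
  set U := {x | r < ‖g x‖}
  have hUopen : IsOpen U := isOpen_lt continuous_const g.continuous.norm
  obtain ⟨x, hx⟩ : U.Nonempty := by
    by_contra! hU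
    exact hr.not_ge ((g.norm_le hr0.le).2 fun x => not_lt.1 fun hx => hU.subset hx)
  have hU : 0 < μ.real U :=
    ENNReal.toReal_pos (hUopen.measure_pos μ ⟨x, hx⟩).ne' (measure_ne_top μ U)
  have key : ∀ᶠ n in atTop, μ.real U * (r ^ 2) ^ n ≤ (b ^ 2) ^ n := h.mono fun n hn =>
    calc μ.real U * (r ^ 2) ^ n = μ.real U * (r ^ n) ^ 2 := by ring
      _ ≤ ‖toLp 2 μ 𝕜 (g ^ n)‖ ^ 2 :=
        measureReal_mul_sq_le_norm_toLp_sq μ hUopen.measurableSet (by positivity) fun x hx => by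
          rw [pow_apply, norm_pow]
          exact pow_le_pow_left₀ hr0.le hx.le n
      _ ≤ (b ^ n) ^ 2 := pow_le_pow_left₀ (norm_nonneg _) hn 2
      _ = (b ^ 2) ^ n := by ring
  exact (pow_le_pow_iff_left₀ hr0.le hb two_ne_zero).1
    (le_of_eventually_mul_pow_le_pow hU (by positivity) key)

theorem norm_toLp_le [IsProbabilityMeasure μ] (f : C(Q, 𝕜)) : ‖toLp 2 μ 𝕜 f‖ ≤ ‖f‖ := by
  have hint : Integrable (fun x => ‖f x‖ ^ 2) μ :=
    (f.continuous.norm.pow 2).integrable_of_hasCompactSupport (.of_compactSpace _)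
  refine (pow_le_pow_iff_left₀ (norm_nonneg _) (norm_nonneg _) two_ne_zero).1 ?_
  rw [norm_toLp_two_sq]
  calc ∫ x, ‖f x‖ ^ 2 ∂μ ≤ ∫ _, ‖f‖ ^ 2 ∂μ := integral_mono hint (integrable_const _)
        fun x => pow_le_pow_left₀ (norm_nonneg _) (f.norm_coe_le_norm x) 2
    _ = ‖f‖ ^ 2 := by simp

theorem norm_map_le_of_norm_toLp_map_le [IsProbabilityMeasure μ] [μ.IsOpenPosMeasure]
    {B : Submodule 𝕜 C(Q, 𝕜)} (hB : B * B ≤ B) {E : C(Q, 𝕜) →ₗ[𝕜] C(Q, 𝕜)}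
    (hE : ∀ f ∈ B, ∀ g ∈ B, E (f * g) = E f * E g)
    (hE₂ : ∀ f ∈ B, ‖toLp 2 μ 𝕜 (E f)‖ ≤ ‖toLp 2 μ 𝕜 f‖) {f : C(Q, 𝕜)} (hf : f ∈ B) :
    ‖E f‖ ≤ ‖f‖ := by
  have hpow : ∀ n : ℕ, f ^ (n + 1) ∈ B ∧ E (f ^ (n + 1)) = E f ^ (n + 1) := by
    intro n
    induction n with
    | zero => simpa using hf
    | succ n ih =>
      rw [pow_succ, pow_succ _ (n + 1), ← ih.2]
      exact ⟨hB (Submodule.mul_mem_mul ih.1 hf), hE _ ih.1 _ hf⟩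
  refine norm_le_of_eventually_norm_toLp_pow_le μ (E f) (norm_nonneg f) ?_
  filter_upwards [eventually_ge_atTop 1] with n hn
  obtain ⟨n, rfl⟩ := Nat.exists_eq_add_of_le' hn
  calc ‖toLp 2 μ 𝕜 (E f ^ (n + 1))‖ = ‖toLp 2 μ 𝕜 (E (f ^ (n + 1)))‖ := by rw [(hpow n).2]
    _ ≤ ‖toLp 2 μ 𝕜 (f ^ (n + 1))‖ := hE₂ _ (hpow n).1
    _ ≤ ‖f ^ (n + 1)‖ := norm_toLp_le μ _
    _ ≤ ‖f‖ ^ (n + 1) := norm_pow_le' f n.succ_pos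

variable {Λ : Type*} {Bc : Λ → Submodule 𝕜 C(Q, 𝕜)} {χ : Λ → 𝕜} {E : C(Q, 𝕜) →ₗ[𝕜] C(Q, 𝕜)}

theorem norm_toLp_map_le_of_orthogonal
    (horth : ∀ t r : Λ, t ≠ r → ∀ f ∈ Bc t, ∀ g ∈ Bc r, ∫ x, f x * conj (g x) ∂μ = 0)
    (hχ : ∀ t, ‖χ t‖ ≤ 1) (hE : ∀ t, ∀ f ∈ Bc t, E f = χ t • f) {f : C(Q, 𝕜)}
    (hf : f ∈ ⨆ t, Bc t) : ‖toLp 2 μ 𝕜 (E f)‖ ≤ ‖toLp 2 μ 𝕜 f‖ := by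
  let K : Λ → Submodule 𝕜 (Lp 𝕜 2 μ) := fun t => (Bc t).map (toLp 2 μ 𝕜).toLinearMap
  have hK : OrthogonalFamily 𝕜 (fun t => K t) fun t => (K t).subtypeₗᵢ := by
    rintro t r htr ⟨_, f, hf, rfl⟩ ⟨_, g, hg, rfl⟩
    simpa [ContinuousMap.inner_toLp] using horth r t htr.symm g hg f hf
  obtain ⟨c, hc, rfl⟩ := (Submodule.mem_iSup_iff_exists_finsupp Bc f).1 hf
  simpa [Finsupp.sum, map_sum, hE _ _ (hc _)] using
    hK.norm_sum_smul_le (v := fun t => toLp 2 μ 𝕜 (c t)) (fun t => Submodule.mem_map_of_mem (hc t))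
      hχ c.support

end ContinuousMap

theorem stmt_1_general {Q : Type*} [TopologicalSpace Q] [CompactSpace Q]
    [MeasurableSpace Q] [BorelSpace Q]
    (μ : Measure Q) [IsProbabilityMeasure μ] [μ.IsOpenPosMeasure]
    {Λ : Type*} [CommSemigroup Λ]
    (Bc : Λ → Submodule ℂ C(Q, ℂ))
    (hmul : ∀ t r : Λ, ∀ f ∈ Bc t, ∀ g ∈ Bc r, f * g ∈ Bc (t * r))
    (horth : ∀ t r : Λ, t ≠ r → ∀ f ∈ Bc t, ∀ g ∈ Bc r,
      ∫ x, (f x) * (starRingEnd ℂ) (g x) ∂μ = 0)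
    (χ : Λ → ℂ) (hχ1 : ∀ t, ‖χ t‖ ≤ 1) (hχm : ∀ t r, χ (t * r) = χ t * χ r)
    (E : C(Q, ℂ) →ₗ[ℂ] C(Q, ℂ))
    (hEdef : ∀ t : Λ, ∀ f ∈ Bc t, E f = χ t • f) :
    (∀ f ∈ (⨆ t, Bc t : Submodule ℂ C(Q, ℂ)), ∀ g ∈ (⨆ t, Bc t : Submodule ℂ C(Q, ℂ)),
        E (f * g) = E f * E g) ∧
    ∀ f ∈ (⨆ t, Bc t : Submodule ℂ C(Q, ℂ)), ‖E f‖ ≤ ‖f‖ := by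
  have hEmul : ∀ f ∈ ⨆ t, Bc t, ∀ g ∈ ⨆ t, Bc t, E (f * g) = E f * E g := by
    intro f hf g hg
    refine E.map_mul_iSup_of_map_mul (B := Bc) (fun t r f hf g hg => ?_) hf hg
    rw [hEdef _ _ (hmul t r f hf g hg), hEdef t f hf, hEdef r g hg, hχm, smul_mul_smul_comm]
  have hBmul : (⨆ t, Bc t) * (⨆ t, Bc t) ≤ ⨆ t, Bc t := Submodule.iSup_mul_iSup_le hmul
  refine ⟨hEmul, fun f hf => ?_⟩
  exact ContinuousMap.norm_map_le_of_norm_toLp_map_le μ hBmul hEmul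
    (fun g hg => ContinuousMap.norm_toLp_map_le_of_orthogonal μ horth hχ1 hEdef hg) hf

/-- If a subalgebra of `C(Q)` is graded (with `L²(Q,μ)`-orthogonal components) by a commutative
semigroup `Λ`, and `χ : Λ → closed unit disc` is a semigroup homomorphism, then the linear map
multiplying the `t`-component by `χ t` is an algebra endomorphism of the graded subalgebra and a
sup-norm contraction on it. -/
theorem stmt_1 {Q : Type*} [TopologicalSpace Q] [CompactSpace Q] [T2Space Q]
    [MeasurableSpace Q] [BorelSpace Q]
    (μ : Measure Q) [IsProbabilityMeasure μ] [μ.Regular] [μ.IsOpenPosMeasure]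
    {Λ : Type*} [CommSemigroup Λ]
    (Bc : Λ → Submodule ℂ C(Q, ℂ))
    (hmul : ∀ t r : Λ, ∀ f ∈ Bc t, ∀ g ∈ Bc r, f * g ∈ Bc (t * r))
    (horth : ∀ t r : Λ, t ≠ r → ∀ f ∈ Bc t, ∀ g ∈ Bc r,
      ∫ x, (f x) * (starRingEnd ℂ) (g x) ∂μ = 0)
    (χ : Λ → ℂ) (hχ1 : ∀ t, ‖χ t‖ ≤ 1) (hχm : ∀ t r, χ (t * r) = χ t * χ r)
    (E : C(Q, ℂ) →ₗ[ℂ] C(Q, ℂ))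
    (hEdef : ∀ t : Λ, ∀ f ∈ Bc t, E f = χ t • f) :
    (∀ f ∈ (⨆ t, Bc t : Submodule ℂ C(Q, ℂ)), ∀ g ∈ (⨆ t, Bc t : Submodule ℂ C(Q, ℂ)),
        E (f * g) = E f * E g) ∧
    ∀ f ∈ (⨆ t, Bc t : Submodule ℂ C(Q, ℂ)), ‖E f‖ ≤ ‖f‖ :=
  stmt_1_general μ Bc hmul horth χ hχ1 hχm E hEdef
end

section
/- Let G be a compact abelian group, S ⊆ Ĝ a subsemigroup containing the trivial character, and A the invariant algebra spanned by S. If S ∩ (−S) = {0} (only the trivial character has its inverse in S), then A is antisymmetric: every real-valued function in A is constant. Conversely, if S ∩ (−S) ≠ {0}, then A contains a nonconstant real-valued function. -/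
/-!
Integration against the normalized Haar measure is multiplicative on `S`: a character `χ ≠ 1`
has `χ a * ∫ χ = ∫ χ` with `χ a ≠ 1`, so `∫ χ = 0`, and a product of two nontrivial characters
of `S` is nontrivial, since otherwise one of them would be the conjugate of the other. By
bilinearity and continuity, `∫ f g = ∫ f * ∫ g` on all of `A`. A real-valued `f ∈ A` then has
`∫ f² = (∫ f)²`, i.e. variance zero, so it is constant. Conversely, if `χ ≠ 1` and `χ̄` lie in `S`,
then `χ + χ̄ = 2 Re χ` is real and equals `2` at the identity but not where `χ ≠ 1`.
-/

open MeasureTheory TopologicalSpace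

namespace ContinuousMap

section Integral

variable {X E : Type*} (𝕜 : Type*) [TopologicalSpace X] [CompactSpace X] [MeasurableSpace X]
  [BorelSpace X] [NormedAddCommGroup E] [NormedSpace ℝ E] [CompleteSpace E]
  [SecondCountableTopologyEither X E] [NontriviallyNormedField 𝕜] [NormedSpace 𝕜 E]
  [SMulCommClass ℝ 𝕜 E] (μ : Measure X) [IsFiniteMeasure μ]

noncomputable def integralCLM : C(X, E) →L[𝕜] E :=
  (L1.integralCLM' 𝕜).comp (toLp 1 μ 𝕜)

theorem integralCLM_apply (g : C(X, E)) : integralCLM 𝕜 μ g = ∫ x, g x ∂μ := by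
  rw [integralCLM, ContinuousLinearMap.comp_apply, ← L1.integral_eq', L1.integral_eq_integral]
  exact integral_congr_ae (coeFn_toLp μ g)

end Integral

section ZeroVariance

variable {X : Type*} [TopologicalSpace X] [CompactSpace X] [MeasurableSpace X] [BorelSpace X]
  (μ : Measure X) [IsProbabilityMeasure μ] [μ.IsOpenPosMeasure]

theorem apply_eq_integral_of_integral_sq_eq_sq (u : C(X, ℝ))
    (h : ∫ x, u x ^ 2 ∂μ = (∫ x, u x ∂μ) ^ 2) (x : X) : u x = ∫ x, u x ∂μ := by
  have hu : MemLp u 2 μ := u.memLp μ ℝ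
  have hvar : ProbabilityTheory.variance u μ = 0 := by
    rw [ProbabilityTheory.variance_eq_sub hu]
    simpa [sub_eq_zero] using h
  exact congrFun ((Continuous.ae_eq_iff_eq μ u.continuous continuous_const).1
    (ProbabilityTheory.ae_eq_integral_of_variance_eq_zero hu hvar)) x

theorem apply_eq_integral_of_integral_mul_self_eq (f : C(X, ℂ)) (hf : ∀ x, (f x).im = 0)
    (h : ∫ x, f x * f x ∂μ = (∫ x, f x ∂μ) * ∫ x, f x ∂μ) (x : X) : f x = ∫ x, f x ∂μ := by
  let u : C(X, ℝ) := ⟨fun x => (f x).re, Complex.continuous_re.comp f.continuous⟩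
  have hfu : ∀ x, f x = (u x : ℂ) := fun x => Complex.ext (by simp [u]) (by simp [u, hf x])
  simp_rw [hfu, ← Complex.ofReal_mul, integral_complex_ofReal, ← Complex.ofReal_mul,
    Complex.ofReal_inj, ← sq] at h
  simp_rw [hfu, integral_complex_ofReal, Complex.ofReal_inj]
  exact apply_eq_integral_of_integral_sq_eq_sq μ u h x

end ZeroVariance

theorem mul_star_self_eq_one {X : Type*} [TopologicalSpace X] {χ : C(X, ℂ)}
    (hχ : ∀ x, ‖χ x‖ = 1) : χ * star χ = 1 := by
  ext x
  simp [Complex.mul_conj', hχ x]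

theorem apply_one_eq_one {G : Type*} [Monoid G] [TopologicalSpace G] {χ : C(G, ℂ)}
    (hχ : ∀ x y, χ (x * y) = χ x * χ y) (h1 : χ 1 ≠ 0) : χ 1 = 1 :=
  (mul_eq_left₀ h1).1 (by rw [← hχ, mul_one])

end ContinuousMap

theorem ContinuousLinearMap.map_mul_of_mem_closure_span {𝕜 A : Type*}
    [NontriviallyNormedField 𝕜] [SeminormedCommRing A] [NormedAlgebra 𝕜 A] (φ : A →L[𝕜] 𝕜)
    {S : Set A} (hS : ∀ a ∈ S, ∀ b ∈ S, φ (a * b) = φ a * φ b) {a b : A}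
    (ha : a ∈ closure (Submodule.span 𝕜 S : Set A))
    (hb : b ∈ closure (Submodule.span 𝕜 S : Set A)) :
    φ (a * b) = φ a * φ b := by
  have extend_right : ∀ a, Set.EqOn (φ ∘L mul 𝕜 A a) (φ a • φ : A →L[𝕜] 𝕜) S →
      ∀ b ∈ closure (Submodule.span 𝕜 S : Set A), φ (a * b) = φ a * φ b :=
    fun a h b hb => by simpa using eqOn_closure_span h hb
  refine extend_right a (fun s hs => ?_) b hb
  simpa [mul_comm] using extend_right s (fun t ht => by simpa using hS s hs t ht) a ha

theorem Complex.eq_one_of_norm_eq_one_of_re_eq_one {z : ℂ} (hn : ‖z‖ = 1) (hre : z.re = 1) :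
    z = 1 := by
  rw [eq_coe_norm_of_nonneg (re_eq_norm.1 (hre.trans hn.symm)), hn, ofReal_one]

theorem integral_eq_zero_of_map_mul {G 𝕜 : Type*} [Group G] [MeasurableSpace G]
    [MeasurableMul G] [RCLike 𝕜] (μ : Measure G) [μ.IsMulLeftInvariant] {χ : G → 𝕜}
    (hχ : ∀ x y, χ (x * y) = χ x * χ y) {a : G} (ha : χ a ≠ 1) : ∫ x, χ x ∂μ = 0 := by
  have h : χ a * ∫ x, χ x ∂μ = ∫ x, χ x ∂μ := by
    simp_rw [← integral_const_mul, ← hχ]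
    exact integral_mul_left_eq_self χ a
  by_contra h0
  exact ha ((mul_eq_right₀ h0).1 h)

theorem integral_mul_eq_mul_integral_of_mem {G : Type*} [Group G] [TopologicalSpace G]
    [MeasurableSpace G] [MeasurableMul G] (μ : Measure G) [IsProbabilityMeasure μ]
    [μ.IsMulLeftInvariant] {S : Set C(G, ℂ)}
    (hchar : ∀ χ ∈ S, (∀ x, ‖χ x‖ = 1) ∧ ∀ x y, χ (x * y) = χ x * χ y)
    (hmulS : ∀ χ ∈ S, ∀ ψ ∈ S, χ * ψ ∈ S) (hS : ∀ χ ∈ S, star χ ∈ S → χ = 1)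
    {χ ψ : C(G, ℂ)} (hχ : χ ∈ S) (hψ : ψ ∈ S) :
    ∫ x, (χ * ψ) x ∂μ = (∫ x, χ x ∂μ) * ∫ x, ψ x ∂μ := by
  have integral_eq_zero : ∀ φ ∈ S, φ ≠ 1 → ∫ x, φ x ∂μ = 0 := fun φ hφ hne => by
    obtain ⟨a, ha⟩ := DFunLike.ne_iff.1 hne
    exact integral_eq_zero_of_map_mul μ (hchar φ hφ).2 ha
  rcases eq_or_ne χ 1 with rfl | hχ1
  · simp
  rcases eq_or_ne ψ 1 with rfl | hψ1
  · simp
  have hχψ : χ * ψ ≠ 1 := fun h => hψ1 <| hS ψ hψ <|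
    left_inv_eq_right_inv h (ContinuousMap.mul_star_self_eq_one (hchar ψ hψ).1) ▸ hχ
  rw [integral_eq_zero _ (hmulS χ hχ ψ hψ) hχψ, integral_eq_zero χ hχ hχ1, zero_mul]

theorem ContinuousMap.exists_add_star_apply_ne {G : Type*} [Monoid G] [TopologicalSpace G]
    {χ : C(G, ℂ)} (hnorm : ∀ x, ‖χ x‖ = 1) (hmul : ∀ x y, χ (x * y) = χ x * χ y)
    (hne : χ ≠ 1) : ∃ x y, (χ + star χ) x ≠ (χ + star χ) y := by
  obtain ⟨a, ha⟩ := DFunLike.ne_iff.1 hne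
  have h1 : χ 1 = 1 := χ.apply_one_eq_one hmul (by simp [← norm_ne_zero_iff, hnorm])
  refine ⟨a, 1, fun h => ha (Complex.eq_one_of_norm_eq_one_of_re_eq_one (hnorm a) ?_)⟩
  simp only [add_apply, star_apply, RCLike.star_def, h1, map_one, Complex.add_conj] at h
  push_cast at h
  exact_mod_cast (by linear_combination h / 2 : ((χ a).re : ℂ) = 1)

theorem stmt_5_general {G : Type*} [CommGroup G] [TopologicalSpace G] [IsTopologicalGroup G]
    [CompactSpace G]
    (S : Set C(G, ℂ))
    (hchar : ∀ χ ∈ S, (∀ x : G, ‖χ x‖ = 1) ∧ ∀ x y : G, χ (x * y) = χ x * χ y)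
    (hmulS : ∀ χ ∈ S, ∀ ψ ∈ S, χ * ψ ∈ S) :
    let A := closure ((Submodule.span ℂ S : Submodule ℂ C(G, ℂ)) : Set C(G, ℂ))
    ((∀ χ ∈ S, star χ ∈ S → χ = 1) →
        ∀ f ∈ A, (∀ x : G, (f x).im = 0) → ∀ x y : G, f x = f y) ∧
    ((∃ χ ∈ S, χ ≠ 1 ∧ star χ ∈ S) →
        ∃ f ∈ A, (∀ x : G, (f x).im = 0) ∧ ∃ x y : G, f x ≠ f y) := by
  intro A
  refine ⟨fun hS f hf hreal x y => ?_, fun ⟨χ, hχ, hne, hstar⟩ => ?_⟩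
  · borelize G
    let μ := Measure.haarMeasure (⊤ : PositiveCompacts G)
    have : IsProbabilityMeasure μ :=
      ⟨by rw [← PositiveCompacts.coe_top]; exact Measure.haarMeasure_self⟩
    have hmul := (ContinuousMap.integralCLM ℂ μ).map_mul_of_mem_closure_span
      (fun χ hχ ψ hψ => by
        simpa only [ContinuousMap.integralCLM_apply] using
          integral_mul_eq_mul_integral_of_mem μ hchar hmulS hS hχ hψ) hf hf
    simp only [ContinuousMap.integralCLM_apply, ContinuousMap.mul_apply] at hmul
    rw [f.apply_eq_integral_of_integral_mul_self_eq μ hreal hmul x,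
      f.apply_eq_integral_of_integral_mul_self_eq μ hreal hmul y]
  · refine ⟨χ + star χ, subset_closure (add_mem (Submodule.subset_span hχ)
      (Submodule.subset_span hstar)), fun x => by simp, ?_⟩
    exact ContinuousMap.exists_add_star_apply_ne (hchar χ hχ).1 (hchar χ hχ).2 hne

/-- Let `G` be a compact abelian group, `S` a semigroup of continuous characters of `G`
containing the trivial character, and `A` the invariant algebra spanned by `S`.  If only the
trivial character of `S` has its inverse (= conjugate `star χ`) in `S`, then `A` is
antisymmetric: every real-valued function in `A` is constant.  Conversely, if some nontrivial
character of `S` has its inverse in `S`, then `A` contains a nonconstant real-valued function. -/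
theorem stmt_5 {G : Type*} [CommGroup G] [TopologicalSpace G] [IsTopologicalGroup G]
    [CompactSpace G] [T2Space G]
    (S : Set C(G, ℂ))
    (hchar : ∀ χ ∈ S, (∀ x : G, ‖χ x‖ = 1) ∧ ∀ x y : G, χ (x * y) = χ x * χ y)
    (hone : (1 : C(G, ℂ)) ∈ S)
    (hmulS : ∀ χ ∈ S, ∀ ψ ∈ S, χ * ψ ∈ S) :
    let A := closure ((Submodule.span ℂ S : Submodule ℂ C(G, ℂ)) : Set C(G, ℂ))
    ((∀ χ ∈ S, star χ ∈ S → χ = 1) →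
        ∀ f ∈ A, (∀ x : G, (f x).im = 0) → ∀ x y : G, f x = f y) ∧
    ((∃ χ ∈ S, χ ≠ 1 ∧ star χ ∈ S) →
        ∃ f ∈ A, (∀ x : G, (f x).im = 0) ∧ ∃ x y : G, f x ≠ f y) :=
  stmt_5_general S hchar hmulS
end

section
/- Let A be a commutative complex Banach algebra with unit and B ⊆ A a closed unital subalgebra. Suppose there is a linear projection L : A → B with L(1) = 1 satisfying L(ab) = L(a)·b for all a ∈ A and b ∈ B. Then every maximal ideal of B is contained in a maximal ideal of A; equivalently, the restriction map from the maximal ideal space of A to that of B (given by restricting characters) is surjective. -/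
/-- Let `A` be a commutative complex Banach algebra with unit and `B ⊆ A` a closed unital
subalgebra admitting a linear projection `L : A → B` with `L 1 = 1` and `L (a * b) = L a * b`
for `b ∈ B`.  Then every maximal ideal of `B` is contained in a maximal ideal of `A`, and every
character of `B` is the restriction of a character of `A`. -/
theorem stmt_6 {A : Type*} [NormedCommRing A] [NormedAlgebra ℂ A] [CompleteSpace A]
    (B : Subalgebra ℂ A) (hBclosed : IsClosed (B : Set A))
    (L : A →L[ℂ] A)
    (hrange : ∀ a : A, L a ∈ B)
    (hproj : ∀ b ∈ B, L b = b)
    (hmod : ∀ a : A, ∀ b ∈ B, L (a * b) = L a * b) :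
    (∀ I : Ideal B, I.IsMaximal →
        ∃ J : Ideal A, J.IsMaximal ∧ ∀ x : B, x ∈ I → (x : A) ∈ J) ∧
    (∀ φ ∈ WeakDual.characterSpace ℂ B, ∃ ψ ∈ WeakDual.characterSpace ℂ A,
        ∀ b : B, ψ (b : A) = φ b) := by
  have key : ∀ I : Ideal B, I.IsMaximal →
      ∃ J : Ideal A, J.IsMaximal ∧ ∀ x : B, x ∈ I → (x : A) ∈ J := by
    intro I hI
    set S : Set A := Subtype.val '' (I : Set B) with hS
    have hspan : Ideal.span S ≠ ⊤ := by
      intro htop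
      have h1 : (1 : A) ∈ Ideal.span S := htop ▸ Submodule.mem_top
      rw [Ideal.span, Submodule.mem_span_set'] at h1
      obtain ⟨n, f, g, hsum⟩ := h1
      have hg : ∀ i : Fin n, ∃ b : B, b ∈ I ∧ (b : A) = (g i : A) := fun i => (g i).2
      choose b hb hbeq using hg
      have hL1 : L 1 = 1 := hproj 1 B.one_mem
      have hLsum : L 1 = ∑ i, (L (f i) * (b i : A)) := by
        rw [← hsum, map_sum]
        refine Finset.sum_congr rfl fun i _ => ?_
        rw [smul_eq_mul, ← hbeq i, hmod (f i) (b i : A) (b i).2]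
      have hc : ∀ i, (⟨L (f i), hrange (f i)⟩ * b i : B) ∈ I :=
        fun i => I.mul_mem_left _ (hb i)
      have h1B : (1 : B) ∈ I := by
        have : ((1 : B) : A) = ((∑ i, (⟨L (f i), hrange (f i)⟩ * b i : B) : B) : A) := by
          push_cast
          rw [← hLsum, hL1]
        have heq : (1 : B) = ∑ i, (⟨L (f i), hrange (f i)⟩ * b i : B) :=
          Subtype.val_injective this
        rw [heq]
        exact Ideal.sum_mem I fun i _ => hc i
      exact hI.ne_top (Ideal.eq_top_of_isUnit_mem I h1B isUnit_one)
    obtain ⟨J, hJmax, hJ⟩ := Ideal.exists_le_maximal _ hspan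
    exact ⟨J, hJmax, fun x hx => hJ (Ideal.subset_span ⟨x, hx, rfl⟩)⟩
  refine ⟨key, ?_⟩
  intro φ hφ
  set φ' : WeakDual.characterSpace ℂ B := ⟨φ, hφ⟩ with hφ'
  have hker : (RingHom.ker φ').IsMaximal := inferInstance
  obtain ⟨J, hJmax, hJ⟩ := key _ hker
  haveI := hJmax
  refine ⟨(J.toCharacterSpace : WeakDual ℂ A), J.toCharacterSpace.2, fun b => ?_⟩
  set x : B := b - algebraMap ℂ B (φ' b) with hx
  have hxker : x ∈ RingHom.ker φ' := by
    simp [hx, RingHom.mem_ker, map_sub, AlgHomClass.commutes]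
  have hxJ : (x : A) ∈ J := hJ x hxker
  have h0 : J.toCharacterSpace (x : A) = 0 :=
    Ideal.toCharacterSpace_apply_eq_zero_of_mem J hxJ
  have hcoe : (x : A) = (b : A) - algebraMap ℂ A (φ' b) := by
    push_cast [hx]
    simp [Algebra.algebraMap_eq_smul_one]
  rw [hcoe, map_sub, AlgHomClass.commutes, sub_eq_zero] at h0
  exact h0
end

section
/- Let S ⊆ ℤⁿ be a subsemigroup containing 0 and let γ : ℝ≥0 → Hom(S, [0,1]) be a one-parameter semigroup of semigroup homomorphisms S → ([0,1], ·) (i.e., γ(t+s)(x) = γ(t)(x)·γ(s)(x), γ continuous in t pointwise) with γ(0) the constant function 1. Then there exists a linear functional λ : ℝⁿ → ℝ with λ(x) ≥ 0 for all x ∈ S, such that γ(t)(x) = e^{−tλ(x)} for all t ≥ 0 and x ∈ S. -/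
/-!
For fixed `x ∈ S`, `t ↦ γ t x` is a continuous solution of `f (t + s) = f t * f s` with
`f 0 = 1`; halving shows that it never vanishes, so `log ∘ f` is a continuous additive function
on `[0, ∞)` and `γ t x = exp (-t λ(x))` with `λ(x) = -log (γ 1 x) ≥ 0`. Multiplicativity in `x`
makes `λ` additive on `S`; it extends to the group generated by `S` and, `ℝ` being divisible,
to `ℤⁿ`, and every additive map `ℤⁿ → ℝ` is the restriction of a linear functional on `ℝⁿ`.
-/

open Function Filter Set Topology

lemma eq_mul_of_add_of_continuousOn_Ici {f : ℝ → ℝ}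
    (hadd : ∀ t ≥ (0 : ℝ), ∀ s ≥ (0 : ℝ), f (t + s) = f t + f s)
    (hf : ContinuousOn f (Ici 0)) {t : ℝ} (ht : 0 ≤ t) : f t = t * f 1 := by
  have hf0 : f 0 = 0 := by simpa using hadd 0 le_rfl 0 le_rfl
  -- Extend `f` to an odd additive function on `ℝ` through `t = t⁺ - t⁻`.
  let F : ℝ →+ ℝ := AddMonoidHom.mk' (fun t => f t⁺ - f t⁻) fun a b => by
    have key : (a + b)⁺ + (a⁻ + b⁻) = (a + b)⁻ + (a⁺ + b⁺) := by
      linarith [posPart_sub_negPart a, posPart_sub_negPart b, posPart_sub_negPart (a + b)]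
    have h := congrArg f key
    rw [hadd _ (posPart_nonneg _) _ (add_nonneg (negPart_nonneg a) (negPart_nonneg b)),
      hadd _ (negPart_nonneg _) _ (add_nonneg (posPart_nonneg a) (posPart_nonneg b)),
      hadd _ (negPart_nonneg a) _ (negPart_nonneg b),
      hadd _ (posPart_nonneg a) _ (posPart_nonneg b)] at h
    linarith
  have hF : Continuous F :=
    (hf.comp_continuous continuous_posPart fun s => mem_Ici.2 (posPart_nonneg s)).sub
      (hf.comp_continuous continuous_negPart fun s => mem_Ici.2 (negPart_nonneg s))
  have hFf : ∀ s ≥ (0 : ℝ), F s = f s := fun s hs => by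
    simp [F, posPart_eq_self.2 hs, negPart_eq_zero.2 hs, hf0]
  rw [← hFf t ht, ← hFf 1 zero_le_one, ← smul_eq_mul, ← map_real_smul F hF, smul_eq_mul, mul_one]

lemma ne_zero_of_mul_of_continuousWithinAt {f : ℝ → ℝ}
    (hmul : ∀ t ≥ (0 : ℝ), ∀ s ≥ (0 : ℝ), f (t + s) = f t * f s)
    (hf : ContinuousWithinAt f (Ici 0) 0) (h0 : f 0 ≠ 0) {t : ℝ} (ht : 0 ≤ t) : f t ≠ 0 := by
  intro hft
  -- `f t = f (t / 2) ^ 2`, so a zero of `f` at `t` propagates to every `t / 2 ^ k`.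
  have hzero : ∀ k : ℕ, f (t / 2 ^ k) = 0 := by
    intro k
    induction k with
    | zero => simpa using hft
    | succ k ih =>
      have hk : 0 ≤ t / 2 ^ (k + 1) := by positivity
      have h := hmul _ hk _ hk
      rw [show t / 2 ^ (k + 1) + t / 2 ^ (k + 1) = t / 2 ^ k by rw [pow_succ]; ring, ih] at h
      exact mul_self_eq_zero.1 h.symm
  have hlim : Tendsto (fun k : ℕ => t / 2 ^ k) atTop (𝓝[Ici 0] 0) := by
    refine tendsto_nhdsWithin_iff.2 ⟨?_, Eventually.of_forall fun k => mem_Ici.2 (by positivity)⟩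
    simpa [div_eq_mul_inv] using
      (tendsto_pow_atTop_nhds_zero_of_lt_one (r := (2 : ℝ)⁻¹) (by norm_num) (by norm_num)).const_mul t
  exact h0 (tendsto_nhds_unique (hf.tendsto.comp hlim) (by simp [comp_def, hzero]))

lemma eq_exp_of_mul_of_continuousOn {f : ℝ → ℝ}
    (hmul : ∀ t ≥ (0 : ℝ), ∀ s ≥ (0 : ℝ), f (t + s) = f t * f s)
    (hf : ContinuousOn f (Ici 0)) (h0 : f 0 = 1) {t : ℝ} (ht : 0 ≤ t) :
    f t = Real.exp (t * Real.log (f 1)) := by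
  have hpos : ∀ s ≥ (0 : ℝ), 0 < f s := fun s hs => by
    have hs2 : 0 ≤ s / 2 := by positivity
    have h := hmul _ hs2 _ hs2
    rw [add_halves] at h
    rw [h]
    exact mul_self_pos.2 (ne_zero_of_mul_of_continuousWithinAt hmul (hf 0 self_mem_Ici)
      (h0 ▸ one_ne_zero) hs2)
  have hlog := eq_mul_of_add_of_continuousOn_Ici (f := fun s => Real.log (f s))
    (fun a ha b hb => by
      simp only [hmul a ha b hb, Real.log_mul (hpos a ha).ne' (hpos b hb).ne'])
    (hf.log fun s hs => (hpos s hs).ne') ht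
  rw [← hlog, Real.exp_log (hpos t ht)]

lemma AddSubmonoid.exists_addMonoidHom_extension {G Q : Type*} [AddCommGroup G] [AddCommGroup Q]
    [DivisibleBy Q ℤ] (S : AddSubmonoid G) (c : S →+ Q) :
    ∃ ψ : G →+ Q, ∀ x : S, ψ x = c x := by
  -- `c` lifts to the Grothendieck group of `S`, which embeds into `G` since `S` is cancellative;
  -- divisibility of `Q` (Baer's criterion) extends the lift along this embedding.
  open Algebra.GrothendieckAddGroup in
  have hinj : Injective (lift S.subtype) :=
    (AddSubmonoid.LocalizationMap.lift_injective_iff _ _).2 fun x y =>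
      of_injective.eq_iff.trans Subtype.val_injective.eq_iff.symm
  obtain ⟨ψ, hψ⟩ := (Module.Baer.of_divisible Q).extension_property_addMonoidHom _ hinj (lift c)
  refine ⟨ψ, fun x => ?_⟩
  simpa [Algebra.GrothendieckAddGroup.lift] using DFunLike.congr_fun hψ (of x)

lemma AddMonoidHom.exists_linearMap_comp_intCast {ι : Type*} [Fintype ι] (ψ : (ι → ℤ) →+ ℝ) :
    ∃ l : (ι → ℝ) →ₗ[ℝ] ℝ, ∀ x : ι → ℤ, l (fun j => (x j : ℝ)) = ψ x := by
  classical
  refine ⟨∑ i, ψ (Pi.single i 1) • LinearMap.proj i, fun x => ?_⟩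
  have hsingle : ∀ i, Pi.single i (x i) = x i • (Pi.single i 1 : ι → ℤ) := fun i => by
    rw [← Pi.single_smul, smul_eq_mul, mul_one]
  conv_rhs => rw [← Finset.univ_sum_single x, map_sum]
  simp only [hsingle, map_zsmul]
  simp [mul_comm]

/-- A one-parameter semigroup `γ : ℝ≥0 → Hom(S,[0,1])` of semigroup homomorphisms of a
subsemigroup `S ⊆ ℤⁿ` containing `0` (pointwise continuous in `t`, with `γ 0 ≡ 1`) has the form
`γ t x = exp (−t·λ(x))` for a linear functional `λ : ℝⁿ → ℝ` that is nonnegative on `S`. -/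
theorem stmt_8 {n : ℕ} (S : AddSubmonoid (Fin n → ℤ))
    (γ : ℝ → (Fin n → ℤ) → ℝ)
    (hval : ∀ t ≥ (0 : ℝ), ∀ x ∈ S, γ t x ∈ Set.Icc (0 : ℝ) 1)
    (hhomx : ∀ t ≥ (0 : ℝ), ∀ x ∈ S, ∀ y ∈ S, γ t (x + y) = γ t x * γ t y)
    (hhomt : ∀ t ≥ (0 : ℝ), ∀ s ≥ (0 : ℝ), ∀ x ∈ S, γ (t + s) x = γ t x * γ s x)
    (hcont : ∀ x ∈ S, ContinuousOn (fun t => γ t x) (Set.Ici (0 : ℝ)))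
    (hzero : ∀ x ∈ S, γ 0 x = 1) :
    ∃ l : (Fin n → ℝ) →ₗ[ℝ] ℝ,
      (∀ x ∈ S, 0 ≤ l (fun j => (x j : ℝ))) ∧
      ∀ t ≥ (0 : ℝ), ∀ x ∈ S, γ t x = Real.exp (-(t * l (fun j => (x j : ℝ)))) := by
  have hexp : ∀ t ≥ (0 : ℝ), ∀ x ∈ S, γ t x = Real.exp (t * Real.log (γ 1 x)) :=
    fun t ht x hx => eq_exp_of_mul_of_continuousOn (fun a ha b hb => hhomt a ha b hb x hx)
      (hcont x hx) (hzero x hx) ht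
  have hpos : ∀ x ∈ S, 0 < γ 1 x := fun x hx => hexp 1 zero_le_one x hx ▸ Real.exp_pos _
  let c : S →+ ℝ := AddMonoidHom.mk' (fun x => -Real.log (γ 1 x)) fun x y => by
    rw [AddSubmonoid.coe_add, hhomx 1 zero_le_one _ x.2 _ y.2,
      Real.log_mul (hpos _ x.2).ne' (hpos _ y.2).ne', neg_add]
  obtain ⟨ψ, hψ⟩ := S.exists_addMonoidHom_extension c
  obtain ⟨l, hl⟩ := ψ.exists_linearMap_comp_intCast
  refine ⟨l, fun x hx => ?_, fun t ht x hx => ?_⟩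
  · rw [hl, hψ ⟨x, hx⟩]
    obtain ⟨hγ0, hγ1⟩ := hval 1 zero_le_one x hx
    exact neg_nonneg.2 (Real.log_nonpos hγ0 hγ1)
  · rw [hl, hψ ⟨x, hx⟩, hexp t ht x hx]
    simp [c]
end

section
/- Let G be a compact Hausdorff group and A ⊆ C(G) a closed subspace that is invariant under left and right translations. Then A is invariant under the involution f ↦ f*, where f*(g) = conjugate of f(g⁻¹). -/
/-!
Fix a normalised Haar measure `μ` on `G` and view `C(G)` inside `L²(G, μ)`. If `v ∈ L²` is
orthogonal to `A`, then `c = v ⋆ f` is an average of left translates of `f`, hence lies in `A`,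
and so does the average `D` of right translates of `c` weighted by `conj f`. Unfolding the
integrals gives `⟪D, v⟫ = ‖c‖²`, so `c = 0` and `⟪v, f*⟫ = conj (c 1) = 0`: thus `f*` lies in the
`L²`-closure of `A`. Right convolution with a continuous function maps `A` into `A` and is
bounded from the `L²` norm to the sup norm, while for an approximate identity it moves `f*` by
little in the sup norm. Hence `f*` is a uniform limit of elements of `A`, and `A` is closed.
-/

open MeasureTheory
open scoped ComplexConjugate InnerProductSpace

theorem MeasureTheory.Integrable.smul_continuous_of_compactSpace {X 𝕜 F : Type*}
    [TopologicalSpace X] [CompactSpace X] [MeasurableSpace X] [OpensMeasurableSpace X]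
    {μ : Measure X} [NormedField 𝕜] [NormedAddCommGroup F] [NormedSpace 𝕜 F]
    {w : X → 𝕜} (hw : Integrable w μ) {Φ : X → F} (hΦ : Continuous Φ) :
    Integrable (fun x => w x • Φ x) μ :=
  hw.smul_of_top_left (hΦ.memLp_top_of_hasCompactSupport (.of_compactSpace Φ) μ)

theorem Submodule.integral_mem {X E : Type*} [MeasurableSpace X] {μ : Measure X}
    [IsProbabilityMeasure μ] [NormedAddCommGroup E] [NormedSpace ℂ E] [CompleteSpace E]
    (A : Submodule ℂ E) (hA : IsClosed (A : Set E)) {F : X → E} (hF : Integrable F μ)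
    (hmem : ∀ x, F x ∈ A) : ∫ x, F x ∂μ ∈ A :=
  (A.restrictScalars ℝ).convex.integral_mem hA (.of_forall hmem) hF

namespace ContinuousMap

lemma integrable {X E : Type*} [TopologicalSpace X] [CompactSpace X] [MeasurableSpace X]
    [OpensMeasurableSpace X] (μ : Measure X) [IsFiniteMeasure μ] [NormedAddCommGroup E]
    (h : C(X, E)) : Integrable h μ :=
  h.continuous.integrable_of_hasCompactSupport (.of_compactSpace _)

lemma norm_toLp_apply_le {X E 𝕜 : Type*} [TopologicalSpace X] [CompactSpace X]
    [MeasurableSpace X] [BorelSpace X] (μ : Measure X) [IsProbabilityMeasure μ]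
    [NormedAddCommGroup E] [SecondCountableTopologyEither X E] [NontriviallyNormedField 𝕜]
    [NormedSpace 𝕜 E] (p : ENNReal) [Fact (1 ≤ p)] (h : C(X, E)) :
    ‖toLp p μ 𝕜 h‖ ≤ ‖h‖ := by
  refine ((toLp p μ 𝕜).le_opNorm h).trans (mul_le_of_le_one_left (norm_nonneg _) ?_)
  simpa [measureUnivNNReal] using toLp_norm_le (E := E) (p := p) μ (𝕜 := 𝕜)

section Translate

variable {G E : Type*} [Group G] [TopologicalSpace G] [IsTopologicalGroup G] [TopologicalSpace E]

def translateLeft (y : G) (h : C(G, E)) : C(G, E) := h.comp (Homeomorph.mulLeft y⁻¹ : C(G, G))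

def translateRight (z : G) (h : C(G, E)) : C(G, E) := h.comp (Homeomorph.mulRight z : C(G, G))

@[simp] lemma translateLeft_apply (y : G) (h : C(G, E)) (x : G) :
    translateLeft y h x = h (y⁻¹ * x) := rfl

@[simp] lemma translateRight_apply (z : G) (h : C(G, E)) (x : G) :
    translateRight z h x = h (x * z) := rfl

@[simp] lemma translateRight_one (h : C(G, E)) : translateRight 1 h = h := by
  ext; simp

lemma continuous_translateLeft (h : C(G, E)) : Continuous fun y : G => translateLeft y h :=
  continuous_of_continuous_uncurry _ <| h.continuous.comp (continuous_fst.inv.mul continuous_snd)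

lemma continuous_translateRight (h : C(G, E)) : Continuous fun z : G => translateRight z h :=
  continuous_of_continuous_uncurry _ <| h.continuous.comp (continuous_snd.mul continuous_fst)

lemma norm_translateLeft_le [CompactSpace G] {F : Type*} [SeminormedAddCommGroup F]
    (y : G) (h : C(G, F)) : ‖translateLeft y h‖ ≤ ‖h‖ :=
  (norm_le _ (norm_nonneg _)).2 fun _ => h.norm_coe_le_norm _

end Translate

section Convolution

variable {G E : Type*} [Group G] [TopologicalSpace G] [IsTopologicalGroup G] [CompactSpace G]
  [MeasurableSpace G] [NormedAddCommGroup E] [NormedSpace ℂ E] [CompleteSpace E]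
  (μ : Measure G)

noncomputable def leftConv (w : G → ℂ) (h : C(G, E)) : C(G, E) :=
  ∫ y, w y • translateLeft y h ∂μ

noncomputable def rightConv (w : G → ℂ) (h : C(G, E)) : C(G, E) :=
  ∫ z, w z • translateRight z h ∂μ

variable [OpensMeasurableSpace G] {μ} {w : G → ℂ}

lemma leftConv_apply (hw : Integrable w μ) (h : C(G, E)) (x : G) :
    leftConv μ w h x = ∫ y, w y • h (y⁻¹ * x) ∂μ :=
  ((evalCLM ℂ x).integral_comp_comm
    (hw.smul_continuous_of_compactSpace (continuous_translateLeft h))).symm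

lemma rightConv_apply (hw : Integrable w μ) (h : C(G, E)) (x : G) :
    rightConv μ w h x = ∫ z, w z • h (x * z) ∂μ :=
  ((evalCLM ℂ x).integral_comp_comm
    (hw.smul_continuous_of_compactSpace (continuous_translateRight h))).symm

lemma norm_rightConv_sub_integral_smul_le (hw : Integrable w μ) {h : C(G, E)} {δ : ℝ}
    (hδ : ∀ z, w z ≠ 0 → ‖translateRight z h - h‖ ≤ δ) :
    ‖rightConv μ w h - (∫ z, w z ∂μ) • h‖ ≤ δ * ∫ z, ‖w z‖ ∂μ := by
  rw [rightConv, ← integral_smul_const, ← integral_sub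
    (hw.smul_continuous_of_compactSpace (continuous_translateRight h)) (hw.smul_const h)]
  simp_rw [← smul_sub]
  rw [← integral_const_mul]
  refine norm_integral_le_of_norm_le (hw.norm.const_mul δ) (.of_forall fun z => ?_)
  rw [norm_smul, mul_comm]
  by_cases hz : w z = 0
  · simp [hz]
  · exact mul_le_mul_of_nonneg_right (hδ z hz) (norm_nonneg _)

lemma exists_norm_rightConv_sub_le [IsFiniteMeasure μ] [μ.IsOpenPosMeasure] (h : C(G, ℂ))
    {ε : ℝ} (hε : 0 < ε) :
    ∃ w : C(G, ℂ), ‖rightConv μ w h - h‖ ≤ ε := by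
  set U : Set G := {u | ‖translateRight u h - h‖ < ε}
  have hU : IsOpen U :=
    isOpen_lt ((continuous_translateRight h).sub continuous_const).norm continuous_const
  have h1U : (1 : G) ∈ U := by simpa [U] using hε
  obtain ⟨φ, hφU, hφ1, hφ01⟩ := exists_continuous_zero_one_of_isCompact' isCompact_singleton
    hU.isClosed_compl (Set.disjoint_singleton_left.2 (not_not.2 h1U))
  set m := ∫ z, φ z ∂μ
  have hm : 0 < m := φ.continuous.integral_pos_of_hasCompactSupport_nonneg_nonzero
    (.of_compactSpace _) (fun z => (hφ01 z).1) (x := 1) (by simp [hφ1 rfl])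
  let w : C(G, ℂ) := ⟨fun z => ((φ z / m : ℝ) : ℂ), by fun_prop⟩
  have hw_int : ∫ z, w z ∂μ = 1 := by
    rw [show (fun z => w z) = fun z => ((φ z / m : ℝ) : ℂ) from rfl, integral_complex_ofReal,
      integral_div, div_self hm.ne', Complex.ofReal_one]
  have hw_norm : ∫ z, ‖w z‖ ∂μ = 1 := by
    simp only [w, coe_mk, Complex.norm_real, Real.norm_eq_abs,
      abs_div, abs_of_nonneg (hφ01 _).1, abs_of_pos hm]
    rw [integral_div, div_self hm.ne']
  refine ⟨w, ?_⟩
  have hwU : ∀ z, w z ≠ 0 → ‖translateRight z h - h‖ ≤ ε := fun z hz => by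
    by_contra hzU
    exact hz (by simp [w, hφU (show z ∉ U from fun hz' => hzU hz'.le)])
  simpa [hw_int, hw_norm] using norm_rightConv_sub_integral_smul_le (w.integrable μ) hwU

variable [IsProbabilityMeasure μ] {A : Submodule ℂ C(G, E)}

lemma leftConv_mem (hA : IsClosed (A : Set C(G, E))) (hw : Integrable w μ) {h : C(G, E)}
    (hmem : ∀ y, translateLeft y h ∈ A) :
    leftConv μ w h ∈ A :=
  A.integral_mem hA (hw.smul_continuous_of_compactSpace (continuous_translateLeft h))
    fun y => A.smul_mem _ (hmem y)

lemma rightConv_mem (hA : IsClosed (A : Set C(G, E))) (hw : Integrable w μ) {h : C(G, E)}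
    (hmem : ∀ z, translateRight z h ∈ A) :
    rightConv μ w h ∈ A :=
  A.integral_mem hA (hw.smul_continuous_of_compactSpace (continuous_translateRight h))
    fun z => A.smul_mem _ (hmem z)

end Convolution

section L2

variable {G : Type*} [Group G] [TopologicalSpace G] [IsTopologicalGroup G] [CompactSpace G]
  [MeasurableSpace G] [BorelSpace G] {μ : Measure G} [IsProbabilityMeasure μ]

lemma inner_toLp_star_comp_inv (v : Lp ℂ 2 μ) (f : C(G, ℂ)) :
    ⟪v, toLp 2 μ ℂ (star (f.comp (Homeomorph.inv G : C(G, G))))⟫_ℂ =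
      conj (leftConv μ v f 1) := by
  rw [leftConv_apply ((Lp.memLp v).integrable one_le_two), ← integral_conj, L2.inner_def]
  refine integral_congr_ae ?_
  filter_upwards [coeFn_toLp (p := 2) (𝕜 := ℂ) μ (star (f.comp (Homeomorph.inv G : C(G, G))))]
    with a ha
  rw [ha]
  simp [RCLike.inner_apply, mul_comm]

variable [μ.IsMulLeftInvariant]

lemma rightConv_apply_eq_inner (w h : C(G, ℂ)) (x : G) :
    rightConv μ w h x = ⟪toLp 2 μ ℂ (star (translateLeft x w)), toLp 2 μ ℂ h⟫_ℂ := by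
  rw [MeasureTheory.ContinuousMap.inner_toLp, rightConv_apply (w.integrable μ),
    ← integral_mul_left_eq_self _ x⁻¹]
  simp [mul_comm]

lemma norm_rightConv_sub_rightConv_le (w h₁ h₂ : C(G, ℂ)) :
    ‖rightConv μ w h₁ - rightConv μ w h₂‖ ≤ ‖w‖ * ‖toLp 2 μ ℂ h₁ - toLp 2 μ ℂ h₂‖ := by
  refine (norm_le _ (by positivity)).2 fun x => ?_
  rw [sub_apply, rightConv_apply_eq_inner, rightConv_apply_eq_inner, ← inner_sub_right]
  refine (norm_inner_le_norm _ _).trans (mul_le_mul_of_nonneg_right ?_ (norm_nonneg _))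
  calc _ ≤ ‖star (translateLeft x w)‖ := norm_toLp_apply_le μ 2 _
    _ ≤ ‖w‖ := by rw [norm_star]; exact norm_translateLeft_le x w

lemma inner_toLp_rightConv_star (f c : C(G, ℂ)) (v : Lp ℂ 2 μ) :
    ⟪toLp 2 μ ℂ (rightConv μ ⇑(star f) c), v⟫_ℂ =
      ⟪toLp 2 μ ℂ c, toLp 2 μ ℂ (leftConv μ v f)⟫_ℂ := by
  let P : C(G, ℂ) →L[ℂ] ℂ := (innerSL ℂ (toLp 2 μ ℂ c)).comp (toLp 2 μ ℂ)
  have hP : ∀ x, conj (rightConv μ ⇑(star f) c x) = P (translateLeft x f) := fun x => by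
    have : star (translateLeft x (star f)) = translateLeft x f := by ext; simp
    rw [rightConv_apply_eq_inner, this, inner_conj_symm]
    rfl
  have hv : Integrable v μ := (Lp.memLp v).integrable one_le_two
  calc _ = ∫ a, P (v a • translateLeft a f) ∂μ := by
        rw [L2.inner_def]
        refine integral_congr_ae ?_
        filter_upwards [coeFn_toLp (p := 2) (𝕜 := ℂ) μ (rightConv μ ⇑(star f) c)] with a ha
        rw [ha, RCLike.inner_apply', hP, map_smul, smul_eq_mul, mul_comm]
    _ = P (leftConv μ v f) :=
        P.integral_comp_comm (hv.smul_continuous_of_compactSpace (continuous_translateLeft f))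

variable [μ.IsOpenPosMeasure] {A : Submodule ℂ C(G, ℂ)}

lemma toLp_star_comp_inv_mem_topologicalClosure (hA : IsClosed (A : Set C(G, ℂ)))
    (hleft : ∀ y, ∀ h ∈ A, translateLeft y h ∈ A) (hright : ∀ z, ∀ h ∈ A, translateRight z h ∈ A)
    {f : C(G, ℂ)} (hf : f ∈ A) :
    toLp 2 μ ℂ (star (f.comp (Homeomorph.inv G : C(G, G)))) ∈
      (A.map (toLp 2 μ ℂ : C(G, ℂ) →L[ℂ] Lp ℂ 2 μ).toLinearMap).topologicalClosure := by
  rw [← Submodule.orthogonal_orthogonal_eq_closure, Submodule.mem_orthogonal]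
  intro v hv
  have hc : leftConv μ v f ∈ A :=
    leftConv_mem hA ((Lp.memLp v).integrable one_le_two) fun y => hleft y f hf
  have hD : rightConv μ ⇑(star f) (leftConv μ v f) ∈ A :=
    rightConv_mem hA ((star f).integrable μ) fun z => hright z _ hc
  have hc0 : leftConv μ v f = 0 := by
    rw [← toLp_inj μ (p := 2) (𝕜 := ℂ), map_zero, ← inner_self_eq_zero (𝕜 := ℂ),
      ← inner_toLp_rightConv_star]
    exact hv _ ⟨_, hD, rfl⟩
  rw [inner_toLp_star_comp_inv, hc0]
  simp

lemma mem_of_toLp_mem_topologicalClosure (hA : IsClosed (A : Set C(G, ℂ)))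
    (hright : ∀ z, ∀ h ∈ A, translateRight z h ∈ A) {f : C(G, ℂ)}
    (hf : toLp 2 μ ℂ f ∈
      (A.map (toLp 2 μ ℂ : C(G, ℂ) →L[ℂ] Lp ℂ 2 μ).toLinearMap).topologicalClosure) :
    f ∈ A := by
  rw [← SetLike.mem_coe, ← hA.closure_eq, Metric.mem_closure_iff]
  intro ε hε
  obtain ⟨w, hw⟩ := exists_norm_rightConv_sub_le (μ := μ) f (half_pos hε)
  obtain ⟨_, ⟨a, ha, rfl⟩, hfa⟩ :=
    Metric.mem_closure_iff.1 hf (ε / 2 / (‖w‖ + 1)) (by positivity)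
  refine ⟨rightConv μ w a, rightConv_mem hA (w.integrable μ) fun z => hright z a ha, ?_⟩
  rw [ContinuousLinearMap.coe_coe, dist_eq_norm] at hfa
  rw [dist_eq_norm]
  have hL2 : ‖rightConv μ w f - rightConv μ w a‖ < ε / 2 := by
    refine (norm_rightConv_sub_rightConv_le w f a).trans_lt ?_
    rw [lt_div_iff₀ (by positivity)] at hfa
    nlinarith [norm_nonneg (toLp 2 μ ℂ f - toLp 2 μ ℂ a)]
  calc ‖f - rightConv μ w a‖
      ≤ ‖f - rightConv μ w f‖ + ‖rightConv μ w f - rightConv μ w a‖ :=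
        norm_sub_le_norm_sub_add_norm_sub _ _ _
    _ < ε / 2 + ε / 2 := by rw [norm_sub_rev]; exact add_lt_add_of_le_of_lt hw hL2
    _ = ε := add_halves ε

end L2

end ContinuousMap

theorem stmt_11_general {G : Type*} [Group G] [TopologicalSpace G] [IsTopologicalGroup G]
    [CompactSpace G]
    (A : Submodule ℂ C(G, ℂ)) (hclosed : IsClosed (A : Set C(G, ℂ)))
    (hleft : ∀ g : G, ∀ f ∈ A, f.comp (Homeomorph.mulLeft g : C(G, G)) ∈ A)
    (hright : ∀ g : G, ∀ f ∈ A, f.comp (Homeomorph.mulRight g : C(G, G)) ∈ A) :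
    ∀ f ∈ A, star (f.comp (Homeomorph.inv G : C(G, G))) ∈ A := by
  intro f hf
  borelize G
  let μ := Measure.haarMeasure (⊤ : TopologicalSpace.PositiveCompacts G)
  have : IsProbabilityMeasure μ :=
    ⟨by rw [← TopologicalSpace.PositiveCompacts.coe_top]; exact Measure.haarMeasure_self⟩
  exact ContinuousMap.mem_of_toLp_mem_topologicalClosure (μ := μ) hclosed hright
    (ContinuousMap.toLp_star_comp_inv_mem_topologicalClosure hclosed (fun y => hleft y⁻¹)
      hright hf)

/-- A closed subspace of `C(G)` on a compact Hausdorff group `G` which is invariant under all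
left and right translations is invariant under the involution `f ↦ f*`, where
`f*(g) = conj (f g⁻¹)`. -/
theorem stmt_11 {G : Type*} [Group G] [TopologicalSpace G] [IsTopologicalGroup G]
    [CompactSpace G] [T2Space G]
    (A : Submodule ℂ C(G, ℂ)) (hclosed : IsClosed (A : Set C(G, ℂ)))
    (hleft : ∀ g : G, ∀ f ∈ A, f.comp (Homeomorph.mulLeft g : C(G, G)) ∈ A)
    (hright : ∀ g : G, ∀ f ∈ A, f.comp (Homeomorph.mulRight g : C(G, G)) ∈ A) :
    ∀ f ∈ A, star (f.comp (Homeomorph.inv G : C(G, G))) ∈ A :=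
  stmt_11_general A hclosed hleft hright
end

section
/- Let G be a compact group and A a translation-invariant closed subalgebra of C(G) containing the constants. Then the set Sp A = {τ ∈ Ĝ : M_τ ⊆ A} of irreducible representation classes whose matrix coefficients lie in A has the property: for all τ, σ ∈ Sp A and every irreducible component ρ of τ ⊗ σ appearing in the decomposition of M_τ · M_σ, ρ ∈ Sp A. Conversely, if a set Sp ⊆ Ĝ contains the trivial representation and for any τ,σ ∈ Sp the space M_τ M_σ lies in the span of {M_ρ : ρ ∈ Sp}, then the closure of Σ_{τ ∈ Sp} M_τ is an invariant algebra. -/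
/-!
Translation by `a` acts on the matrix coefficients of a representation `ρ` through the matrix
`ρ a`, since `ρ (a * x) = ρ a * ρ x` and `ρ (x * a) = ρ x * ρ a`; hence each `M_ρ`, and with it
the closure of any sum of such spaces, is translation invariant. Multiplicativity of the sum
follows from that of the generators by bilinearity, and passes to the closure because
multiplication on `C(G)` is continuous, `G` being compact. The first half is immediate, since a
subalgebra containing `M_τ` and `M_σ` contains the span of their products.
-/

open Set

/-- The span of the matrix coefficients of a (matrix-valued) representation `ρ` of `G`. -/
noncomputable def MatCoeff {G : Type*} [TopologicalSpace G] (d : ℕ)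
    (ρ : G → Matrix (Fin d) (Fin d) ℂ) : Submodule ℂ C(G, ℂ) :=
  Submodule.span ℂ {f : C(G, ℂ) | ∃ i j, ∀ g, f g = ρ g i j}

/-- `ρ` is a continuous finite-dimensional matrix representation. -/
def IsContRep {G : Type*} [TopologicalSpace G] [Group G] (d : ℕ)
    (ρ : G → Matrix (Fin d) (Fin d) ℂ) : Prop :=
  ρ 1 = 1 ∧ (∀ g h : G, ρ (g * h) = ρ g * ρ h) ∧ ∀ i j, Continuous fun g => ρ g i j

theorem Submodule.iSup_mul_mem {R A ι : Type*} [CommSemiring R] [Semiring A] [Algebra R A]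
    {p : ι → Submodule R A} (h : ∀ i j, ∀ a ∈ p i, ∀ b ∈ p j, a * b ∈ ⨆ l, p l) {a b : A}
    (ha : a ∈ ⨆ i, p i) (hb : b ∈ ⨆ i, p i) : a * b ∈ ⨆ i, p i := by
  have hle : (⨆ i, p i) * (⨆ i, p i) ≤ ⨆ i, p i := by
    rw [Submodule.iSup_mul]
    refine iSup_le fun i => ?_
    rw [Submodule.mul_iSup]
    exact iSup_le fun j => Submodule.mul_le.2 (h i j)
  exact hle (Submodule.mul_mem_mul ha hb)

theorem Submodule.mapsTo_iSup {R M ι : Type*} [Semiring R] [AddCommMonoid M] [Module R M]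
    (T : M →ₗ[R] M) {p : ι → Submodule R M} (h : ∀ i, MapsTo T (p i) (p i)) :
    MapsTo T ↑(⨆ i, p i) ↑(⨆ i, p i) :=
  fun _ hx => (iSup_le fun i _ hy => Submodule.mem_iSup_of_mem i (h i hy) :
    ⨆ i, p i ≤ (⨆ i, p i).comap T) hx

theorem ContinuousMap.mapsTo_comp_closure_iSup {X R ι : Type*} [TopologicalSpace X]
    [CommSemiring R] [TopologicalSpace R] [IsTopologicalSemiring R]
    {p : ι → Submodule R C(X, R)} (φ : C(X, X)) (h : ∀ i, ∀ f ∈ p i, f.comp φ ∈ p i) :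
    MapsTo (fun f : C(X, R) => f.comp φ) (closure ↑(⨆ i, p i)) (closure ↑(⨆ i, p i)) :=
  (Submodule.mapsTo_iSup (compRightAlgHom R R φ).toLinearMap h).closure (continuous_precomp φ)

section MatCoeff

variable {G : Type*} [TopologicalSpace G] {d : ℕ} {ρ : G → Matrix (Fin d) (Fin d) ℂ}

theorem mk_mem_matCoeff {i j : Fin d} (h : Continuous fun g => ρ g i j) :
    (⟨fun g => ρ g i j, h⟩ : C(G, ℂ)) ∈ MatCoeff d ρ :=
  Submodule.subset_span ⟨i, j, fun _ => rfl⟩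

theorem comp_mem_matCoeff (φ : C(G, G))
    (hφ : ∀ (i j : Fin d) (f : C(G, ℂ)), (∀ g, f g = ρ g i j) → f.comp φ ∈ MatCoeff d ρ)
    {f : C(G, ℂ)} (hf : f ∈ MatCoeff d ρ) : f.comp φ ∈ MatCoeff d ρ :=
  (Submodule.span_le.2 (fun _ ⟨i, j, hij⟩ => hφ i j _ hij) :
    MatCoeff d ρ ≤ (MatCoeff d ρ).comap (ContinuousMap.compRightAlgHom ℂ ℂ φ).toLinearMap) hf

variable [Group G] [ContinuousMul G]

theorem IsContRep.comp_mulLeft_mem_matCoeff (hρ : IsContRep d ρ) (a : G) {f : C(G, ℂ)}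
    (hf : f ∈ MatCoeff d ρ) : f.comp (Homeomorph.mulLeft a : C(G, G)) ∈ MatCoeff d ρ := by
  refine comp_mem_matCoeff _ (fun i j f hf => ?_) hf
  have hsum : f.comp (Homeomorph.mulLeft a : C(G, G)) = ∑ k, ρ a i k • ⟨_, hρ.2.2 k j⟩ := by
    ext x
    simp [hf, hρ.2.1, Matrix.mul_apply]
  rw [hsum]
  exact Submodule.sum_mem _ fun k _ => Submodule.smul_mem _ _ (mk_mem_matCoeff _)

theorem IsContRep.comp_mulRight_mem_matCoeff (hρ : IsContRep d ρ) (a : G) {f : C(G, ℂ)}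
    (hf : f ∈ MatCoeff d ρ) : f.comp (Homeomorph.mulRight a : C(G, G)) ∈ MatCoeff d ρ := by
  refine comp_mem_matCoeff _ (fun i j f hf => ?_) hf
  have hsum : f.comp (Homeomorph.mulRight a : C(G, G)) = ∑ k, ρ a k j • ⟨_, hρ.2.2 i k⟩ := by
    ext x
    simp [hf, hρ.2.1, Matrix.mul_apply, mul_comm]
  rw [hsum]
  exact Submodule.sum_mem _ fun k _ => Submodule.smul_mem _ _ (mk_mem_matCoeff _)

end MatCoeff

theorem stmt_12_general {G : Type*} [Group G] [TopologicalSpace G] [IsTopologicalGroup G]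
    [CompactSpace G] :
    (∀ (A : Subalgebra ℂ C(G, ℂ)), IsClosed (A : Set C(G, ℂ)) →
      (∀ g : G, ∀ f ∈ A, f.comp (Homeomorph.mulLeft g : C(G, G)) ∈ A) →
      (∀ g : G, ∀ f ∈ A, f.comp (Homeomorph.mulRight g : C(G, G)) ∈ A) →
      ∀ (dτ dσ dρ : ℕ) (τ : G → Matrix (Fin dτ) (Fin dτ) ℂ)
        (σ : G → Matrix (Fin dσ) (Fin dσ) ℂ) (ρ : G → Matrix (Fin dρ) (Fin dρ) ℂ),
        IsContRep dτ τ → IsContRep dσ σ → IsContRep dρ ρ →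
        (MatCoeff dτ τ : Set C(G, ℂ)) ⊆ A →
        (MatCoeff dσ σ : Set C(G, ℂ)) ⊆ A →
        MatCoeff dρ ρ ≤ Submodule.span ℂ
          {h : C(G, ℂ) | ∃ f ∈ MatCoeff dτ τ, ∃ k ∈ MatCoeff dσ σ, h = f * k} →
        (MatCoeff dρ ρ : Set C(G, ℂ)) ⊆ A) ∧
    (∀ (ι : Type) (d : ι → ℕ) (ρ : ∀ i, G → Matrix (Fin (d i)) (Fin (d i)) ℂ),
      (∀ i, IsContRep (d i) (ρ i)) →
      (1 : C(G, ℂ)) ∈ (⨆ i, MatCoeff (d i) (ρ i) : Submodule ℂ C(G, ℂ)) →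
      (∀ i j, ∀ f ∈ MatCoeff (d i) (ρ i), ∀ k ∈ MatCoeff (d j) (ρ j),
        f * k ∈ (⨆ l, MatCoeff (d l) (ρ l) : Submodule ℂ C(G, ℂ))) →
      let Aset := closure (((⨆ i, MatCoeff (d i) (ρ i) : Submodule ℂ C(G, ℂ)) :
        Set C(G, ℂ)))
      IsClosed Aset ∧ (1 : C(G, ℂ)) ∈ Aset ∧
        (∀ f ∈ Aset, ∀ k ∈ Aset, f * k ∈ Aset) ∧
        (∀ g : G, ∀ f ∈ Aset, f.comp (Homeomorph.mulLeft g : C(G, G)) ∈ Aset) ∧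
        (∀ g : G, ∀ f ∈ Aset, f.comp (Homeomorph.mulRight g : C(G, G)) ∈ Aset)) := by
  refine ⟨fun A _ _ _ _ _ _ _ _ _ _ _ _ hτA hσA hρ => ?_, fun ι d ρ hρ hone hmul => ?_⟩
  · refine fun f hf => (Submodule.span_le (p := Subalgebra.toSubmodule A)).2 ?_ (hρ hf)
    rintro _ ⟨u, hu, v, hv, rfl⟩
    exact A.mul_mem (hτA hu) (hσA hv)
  · refine ⟨isClosed_closure, subset_closure hone, fun f hf k hk => ?_, fun a => ?_, fun a => ?_⟩
    · exact map_mem_closure₂ continuous_mul hf hk fun f hf k hk => Submodule.iSup_mul_mem hmul hf hk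
    · exact ContinuousMap.mapsTo_comp_closure_iSup _ fun i _ => (hρ i).comp_mulLeft_mem_matCoeff a
    · exact ContinuousMap.mapsTo_comp_closure_iSup _ fun i _ => (hρ i).comp_mulRight_mem_matCoeff a

/-- (a) If `A` is a (bi-)invariant closed unital subalgebra of `C(G)` on a compact group `G` and
`τ, σ ∈ Sp A`, then every irreducible representation `ρ` whose matrix coefficients lie in the
span of `M_τ · M_σ` also has `ρ ∈ Sp A`.  (b) Conversely, for a family of continuous
representations whose coefficient spaces contain the constants and whose pairwise products stay
in the algebraic sum, the closure of the sum of the coefficient spaces is an invariant algebra: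
closed, unital, multiplicatively closed, and invariant under left and right translations. -/
theorem stmt_12 {G : Type*} [Group G] [TopologicalSpace G] [IsTopologicalGroup G]
    [CompactSpace G] [T2Space G] :
    (∀ (A : Subalgebra ℂ C(G, ℂ)), IsClosed (A : Set C(G, ℂ)) →
      (∀ g : G, ∀ f ∈ A, f.comp (Homeomorph.mulLeft g : C(G, G)) ∈ A) →
      (∀ g : G, ∀ f ∈ A, f.comp (Homeomorph.mulRight g : C(G, G)) ∈ A) →
      ∀ (dτ dσ dρ : ℕ) (τ : G → Matrix (Fin dτ) (Fin dτ) ℂ)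
        (σ : G → Matrix (Fin dσ) (Fin dσ) ℂ) (ρ : G → Matrix (Fin dρ) (Fin dρ) ℂ),
        IsContRep dτ τ → IsContRep dσ σ → IsContRep dρ ρ →
        (MatCoeff dτ τ : Set C(G, ℂ)) ⊆ A →
        (MatCoeff dσ σ : Set C(G, ℂ)) ⊆ A →
        MatCoeff dρ ρ ≤ Submodule.span ℂ
          {h : C(G, ℂ) | ∃ f ∈ MatCoeff dτ τ, ∃ k ∈ MatCoeff dσ σ, h = f * k} →
        (MatCoeff dρ ρ : Set C(G, ℂ)) ⊆ A) ∧
    (∀ (ι : Type) (d : ι → ℕ) (ρ : ∀ i, G → Matrix (Fin (d i)) (Fin (d i)) ℂ),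
      (∀ i, IsContRep (d i) (ρ i)) →
      (1 : C(G, ℂ)) ∈ (⨆ i, MatCoeff (d i) (ρ i) : Submodule ℂ C(G, ℂ)) →
      (∀ i j, ∀ f ∈ MatCoeff (d i) (ρ i), ∀ k ∈ MatCoeff (d j) (ρ j),
        f * k ∈ (⨆ l, MatCoeff (d l) (ρ l) : Submodule ℂ C(G, ℂ))) →
      let Aset := closure (((⨆ i, MatCoeff (d i) (ρ i) : Submodule ℂ C(G, ℂ)) :
        Set C(G, ℂ)))
      IsClosed Aset ∧ (1 : C(G, ℂ)) ∈ Aset ∧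
        (∀ f ∈ Aset, ∀ k ∈ Aset, f * k ∈ Aset) ∧
        (∀ g : G, ∀ f ∈ Aset, f.comp (Homeomorph.mulLeft g : C(G, G)) ∈ Aset) ∧
        (∀ g : G, ∀ f ∈ Aset, f.comp (Homeomorph.mulRight g : C(G, G)) ∈ Aset)) :=
  stmt_12_general
end

section
/- Let Q be a compact Hausdorff space, A ⊆ C(Q) a closed unital subalgebra, φ a character of A, and μ a representing probability measure for φ. Then supp μ is a set of antisymmetry for A: every f ∈ A which is real-valued on supp μ is constant on supp μ. -/
/-!
With `u = Re f`, `f = u` on `supp μ`, which is `μ`-conull. Multiplicativity of `φ` gives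
`∫ u² dμ = φ (f²) = (φ f)² = (∫ u dμ)²`, so `u` has variance zero and equals its mean
`μ`-a.e., hence everywhere on `supp μ` by continuity.
-/

open MeasureTheory

/-- The (topological) support of a Borel measure. -/
def measSupport {X : Type*} [TopologicalSpace X] [MeasurableSpace X]
    (μ : Measure X) : Set X :=
  {x | ∀ U : Set X, IsOpen U → x ∈ U → 0 < μ U}

open ProbabilityTheory

section Support

variable {X : Type*} [TopologicalSpace X] [MeasurableSpace X] (μ : Measure X)

theorem measSupport_eq_support : measSupport μ = μ.support := by
  rw [Measure.support_eq_forall_isOpen]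
  ext x
  exact forall_congr' fun _ => Imp.swap

theorem measSupport_mem_ae [μ.Regular] : measSupport μ ∈ ae μ := by
  rw [measSupport_eq_support]
  exact Measure.support_mem_ae_of_regular

variable {μ}

theorem eqOn_measSupport_of_ae_eq {Y : Type*} [TopologicalSpace Y] [T2Space Y]
    {f g : X → Y} (hf : Continuous f) (hg : Continuous g) (h : f =ᵐ[μ] g) :
    Set.EqOn f g (measSupport μ) := by
  rw [measSupport_eq_support]
  exact Measure.support_subset_of_isClosed (isClosed_eq hf hg) h

end Support

theorem ae_eq_integral_of_integral_sq_eq_sq_integral {Ω : Type*} [MeasurableSpace Ω]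
    {μ : Measure Ω} [IsProbabilityMeasure μ] {u : Ω → ℝ} (hu : MemLp u 2 μ)
    (h : ∫ ω, u ω ^ 2 ∂μ = (∫ ω, u ω ∂μ) ^ 2) :
    ∀ᵐ ω ∂μ, u ω = ∫ ω, u ω ∂μ := by
  refine ae_eq_integral_of_variance_eq_zero hu ?_
  rw [variance_eq_sub hu, sub_eq_zero]
  exact h

theorem stmt_15_general {Q : Type*} [TopologicalSpace Q] [CompactSpace Q]
    [MeasurableSpace Q] [BorelSpace Q]
    (A : Subalgebra ℂ C(Q, ℂ))
    (φ : A →ₐ[ℂ] ℂ)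
    (μ : Measure Q) [IsProbabilityMeasure μ] [μ.Regular]
    (hrep : ∀ f : A, φ f = ∫ x, (f : C(Q, ℂ)) x ∂μ) :
    ∀ f : A, (∀ x ∈ measSupport μ, ((f : C(Q, ℂ)) x).im = 0) →
      ∀ x ∈ measSupport μ, ∀ y ∈ measSupport μ,
        (f : C(Q, ℂ)) x = (f : C(Q, ℂ)) y := by
  intro f hf x hx y hy
  let u : C(Q, ℝ) := ⟨fun z => ((f : C(Q, ℂ)) z).re, by fun_prop⟩
  have hfu : (f : Q → ℂ) =ᵐ[μ] fun z => (u z : ℂ) := by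
    filter_upwards [measSupport_mem_ae μ] with z hz
    exact Complex.ext rfl (hf z hz)
  have hφf : φ f = ((∫ z, u z ∂μ : ℝ) : ℂ) := by
    rw [hrep, integral_congr_ae hfu, integral_complex_ofReal]
  have hφff : φ (f * f) = ((∫ z, u z ^ 2 ∂μ : ℝ) : ℂ) := by
    rw [hrep, ← integral_complex_ofReal]
    refine integral_congr_ae ?_
    filter_upwards [hfu] with z hz
    simp [hz, sq]
  have hsq : ∫ z, u z ^ 2 ∂μ = (∫ z, u z ∂μ) ^ 2 := by
    have : ((∫ z, u z ^ 2 ∂μ : ℝ) : ℂ) = (∫ z, u z ∂μ : ℝ) ^ 2 := by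
      rw [← hφff, ← hφf, map_mul, sq]
    exact_mod_cast this
  have hconst := ae_eq_integral_of_integral_sq_eq_sq_integral (u.memLp μ ℝ) hsq
  have hf_const : Set.EqOn (f : Q → ℂ) (fun _ => ((∫ z, u z ∂μ : ℝ) : ℂ)) (measSupport μ) :=
    eqOn_measSupport_of_ae_eq (map_continuous _) continuous_const
      (hfu.trans (hconst.mono fun z hz => congrArg _ hz))
  exact (hf_const hx).trans (hf_const hy).symm

/-- The support of a representing measure of a character of a closed unital subalgebra
`A ⊆ C(Q)` is a set of antisymmetry: every `f ∈ A` real-valued on `supp μ` is constant there. -/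
theorem stmt_15 {Q : Type*} [TopologicalSpace Q] [CompactSpace Q] [T2Space Q]
    [MeasurableSpace Q] [BorelSpace Q]
    (A : Subalgebra ℂ C(Q, ℂ)) (hA : IsClosed (A : Set C(Q, ℂ)))
    (φ : A →ₐ[ℂ] ℂ)
    (μ : Measure Q) [IsProbabilityMeasure μ] [μ.Regular]
    (hrep : ∀ f : A, φ f = ∫ x, (f : C(Q, ℂ)) x ∂μ) :
    ∀ f : A, (∀ x ∈ measSupport μ, ((f : C(Q, ℂ)) x).im = 0) →
      ∀ x ∈ measSupport μ, ∀ y ∈ measSupport μ,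
        (f : C(Q, ℂ)) x = (f : C(Q, ℂ)) y :=
  stmt_15_general A φ μ hrep
end

section
/- Let G be a compact topological group and μ a regular Borel probability measure on G that is idempotent under convolution: μ * μ = μ. Then μ is the normalized Haar measure of the closed subgroup H = supp μ of G. -/
/-!
The support `S` of `μ` is closed and conull, and `μ * μ = μ` makes it closed under multiplication.
In a compact group a closed subsemigroup is a subgroup, since `x⁻¹` is a cluster point of the
positive powers of `x`. For invariance fix an open `U` and put `ψ x = μ (x⁻¹ U)`: it is lower
semicontinuous, and idempotence says `ψ g = ∫ ψ (g x) dμ(x)`. At a minimiser `g ∈ S` of `ψ` on `S`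
this forces `ψ (g x) = ψ g` for a.e. `x`, hence for all `x ∈ S` since `{x | ψ (g x) ≤ ψ g}` is
closed. So `ψ` is constant on `g S = S`, and `μ (h⁻¹ U) = ψ h = ψ 1 = μ U` for `h ∈ S`.
-/

open MeasureTheory

open Measure Set Filter Topology
open scoped ENNReal

theorem measSupport_eq_support_s17 {X : Type*} [TopologicalSpace X] [MeasurableSpace X]
    (μ : Measure X) : measSupport μ = μ.support := by
  rw [support_eq_forall_isOpen]
  ext x
  exact forall_congr' fun _ => forall_comm

section CompactGroup

variable {G : Type*} [Group G] [TopologicalSpace G] [CompactSpace G] [IsTopologicalGroup G]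

theorem inv_mem_of_isClosed_of_mul_mem {S : Set G} (hS : IsClosed S)
    (hmul : ∀ x ∈ S, ∀ y ∈ S, x * y ∈ S) {x : G} (hx : x ∈ S) : x⁻¹ ∈ S := by
  have hpow : ∀ n : ℕ, x ^ (n + 1) ∈ S := by
    intro n
    induction n with
    | zero => simpa using hx
    | succ n ih => rw [pow_succ]; exact hmul _ ih _ hx
  refine hS.mem_of_mapClusterPt (mapClusterPt_inv_atTop_pow.2 (mapClusterPt_self_atTop_pow x)) ?_
  filter_upwards [eventually_ge_atTop 1] with n hn
  obtain ⟨k, rfl⟩ := Nat.exists_eq_add_of_le' hn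
  exact hpow k

theorem exists_subgroup_coe_eq_of_isClosed_of_mul_mem {S : Set G} (hS : IsClosed S)
    (hne : S.Nonempty) (hmul : ∀ x ∈ S, ∀ y ∈ S, x * y ∈ S) :
    ∃ H : Subgroup G, (H : Set G) = S := by
  obtain ⟨x, hx⟩ := hne
  have hinv : ∀ {y}, y ∈ S → y⁻¹ ∈ S := inv_mem_of_isClosed_of_mul_mem hS hmul
  refine ⟨{ carrier := S
            mul_mem' := fun ha hb => hmul _ ha _ hb
            one_mem' := ?_
            inv_mem' := hinv }, rfl⟩
  simpa using hmul _ (hinv hx) _ hx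

end CompactGroup

theorem lowerSemicontinuous_measure_preimage_mul_left {M : Type*} [Mul M] [TopologicalSpace M]
    [ContinuousMul M] [MeasurableSpace M] (μ : Measure M) [μ.Regular] {U : Set M} (hU : IsOpen U) :
    LowerSemicontinuous fun x => μ ((x * ·) ⁻¹' U) := by
  intro x₀ t ht
  obtain ⟨K, hKU, hK, htK⟩ :=
    Regular.innerRegular (hU.preimage (continuous_const_mul x₀)) t ht
  have hnear : ∀ᶠ x in 𝓝 x₀, ∀ k ∈ K, x * k ∈ U :=
    hK.eventually_forall_of_forall_eventually fun k hk =>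
      continuous_mul.continuousAt (hU.mem_nhds (hKU hk))
  filter_upwards [hnear] with x hx
  exact htK.trans_le (measure_mono hx)

section Idempotent

variable {M : Type*} [Mul M] [MeasurableSpace M] {μ : Measure M} [SFinite μ]
  (hm : Measurable fun p : M × M => p.1 * p.2)
  (hidem : map (fun p : M × M => p.1 * p.2) (μ.prod μ) = μ)
include hm hidem

theorem lintegral_measure_preimage_mul_left_of_map_mul_prod_eq {V : Set M}
    (hV : MeasurableSet V) : ∫⁻ x, μ ((x * ·) ⁻¹' V) ∂μ = μ V := by
  conv_rhs => rw [← hidem]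
  rw [map_apply hm hV, prod_apply (hm hV)]
  rfl

variable [TopologicalSpace M] [ContinuousMul M]

theorem mul_mem_support_of_map_mul_prod_eq {x y : M} (hx : x ∈ μ.support)
    (hy : y ∈ μ.support) : x * y ∈ μ.support := by
  rw [mem_support_iff_forall] at hx hy ⊢
  intro U hU
  obtain ⟨V, hV, W, hW, hVW⟩ := mem_nhds_prod_iff.1 (continuous_mul.continuousAt hU)
  calc 0 < μ V * μ W := ENNReal.mul_pos (hx V hV).ne' (hy W hW).ne'
    _ = μ.prod μ (V ×ˢ W) := (prod_prod V W).symm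
    _ ≤ μ.prod μ ((fun p : M × M => p.1 * p.2) ⁻¹' U) := measure_mono hVW
    _ ≤ map (fun p : M × M => p.1 * p.2) (μ.prod μ) U := le_map_apply hm.aemeasurable U
    _ = μ U := by rw [hidem]

end Idempotent

section Invariance

variable {G : Type*} [Group G] [TopologicalSpace G] [IsTopologicalGroup G] [CompactSpace G]
  [MeasurableSpace G] [BorelSpace G] {μ : Measure G} [IsProbabilityMeasure μ] [μ.Regular]

theorem apply_eq_apply_one_of_lintegral_comp_mul_left_eq {H : Subgroup G}
    (hH : (H : Set G) = μ.support) {ψ : G → ℝ≥0∞} (hψ : LowerSemicontinuous ψ)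
    (hψ_ne_top : ∀ g, ψ g ≠ ∞) (hmean : ∀ g, ∫⁻ x, ψ (g * x) ∂μ = ψ g) {h : G} (hh : h ∈ H) :
    ψ h = ψ 1 := by
  have hH_closed : IsClosed (H : Set G) := hH ▸ isClosed_support
  have hH_ae : (H : Set G) ∈ ae μ := hH ▸ support_mem_ae_of_regular
  obtain ⟨g, hg, hmin⟩ := (hψ.lowerSemicontinuousOn _).exists_isMinOn
    ⟨1, H.one_mem⟩ hH_closed.isCompact
  have hψg : LowerSemicontinuous fun x => ψ (g * x) := hψ.comp (continuous_const_mul g)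
  have hge : (fun _ => ψ g) ≤ᵐ[μ] fun x => ψ (g * x) := by
    filter_upwards [hH_ae] with x hx
    exact hmin (H.mul_mem hg hx)
  have heq : (fun _ => ψ g) =ᵐ[μ] fun x => ψ (g * x) :=
    ae_eq_of_ae_le_of_lintegral_le hge (by simp [hψ_ne_top]) hψg.measurable.aemeasurable
      (by simp [hmean])
  have hle : (H : Set G) ⊆ {x | ψ (g * x) ≤ ψ g} :=
    hH ▸ support_subset_of_isClosed (hψg.isClosed_preimage _) (heq.mono fun _ hx => hx.ge)
  have hconst : ∀ x ∈ H, ψ x = ψ g := fun x hx => by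
    have hx' : g⁻¹ * x ∈ H := H.mul_mem (H.inv_mem hg) hx
    have hgx : ψ (g * (g⁻¹ * x)) = ψ x := by rw [mul_inv_cancel_left]
    exact le_antisymm (hgx ▸ hle hx') (hmin hx)
  rw [hconst h hh, hconst 1 H.one_mem]

theorem map_mul_left_eq_self_of_map_mul_prod_eq
    (hm : Measurable fun p : G × G => p.1 * p.2)
    (hidem : map (fun p : G × G => p.1 * p.2) (μ.prod μ) = μ) {H : Subgroup G}
    (hH : (H : Set G) = μ.support) {h : G} (hh : h ∈ H) : map (h * ·) μ = μ := by
  have hmeas : Measurable (h * ·) := (continuous_const_mul h).measurable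
  have : IsProbabilityMeasure (map (h * ·) μ) := isProbabilityMeasure_map hmeas.aemeasurable
  refine ext_of_generate_finite _ BorelSpace.measurable_eq isPiSystem_isOpen
    (fun U hU => ?_) (by simp)
  rw [map_apply hmeas hU.measurableSet]
  have hmean (g : G) : ∫⁻ x, μ (((g * x) * ·) ⁻¹' U) ∂μ = μ ((g * ·) ⁻¹' U) := by
    simpa only [preimage_preimage, mul_assoc] using
      lintegral_measure_preimage_mul_left_of_map_mul_prod_eq hm hidem
        (hU.preimage (continuous_const_mul g)).measurableSet
  simpa using apply_eq_apply_one_of_lintegral_comp_mul_left_eq hH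
    (lowerSemicontinuous_measure_preimage_mul_left μ hU) (fun _ => measure_ne_top _ _) hmean hh

end Invariance

theorem stmt_17_general {G : Type*} [Group G] [TopologicalSpace G] [IsTopologicalGroup G]
    [CompactSpace G] [MeasurableSpace G] [BorelSpace G]
    (hm : Measurable fun p : G × G => p.1 * p.2)
    (μ : Measure G) [IsProbabilityMeasure μ] [μ.Regular]
    (hidem : Measure.map (fun p : G × G => p.1 * p.2) (μ.prod μ) = μ) :
    ∃ H : Subgroup G, IsClosed (H : Set G) ∧ measSupport μ = (H : Set G) ∧
      ∀ h ∈ H, Measure.map (fun x => h * x) μ = μ := by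
  obtain ⟨H, hH⟩ := exists_subgroup_coe_eq_of_isClosed_of_mul_mem isClosed_support
    (Filter.nonempty_of_mem support_mem_ae_of_regular)
    fun _ hx _ hy => mul_mem_support_of_map_mul_prod_eq hm hidem hx hy
  exact ⟨H, hH ▸ isClosed_support, (measSupport_eq_support_s17 μ).trans hH.symm,
    fun _ hh => map_mul_left_eq_self_of_map_mul_prod_eq hm hidem hH hh⟩

/-- A convolution-idempotent regular Borel probability measure on a compact group is the
normalized Haar measure of the closed subgroup `H = supp μ`: its support is a closed subgroup
and it is invariant under translations by elements of that subgroup. -/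
theorem stmt_17 {G : Type*} [Group G] [TopologicalSpace G] [IsTopologicalGroup G]
    [CompactSpace G] [T2Space G] [MeasurableSpace G] [BorelSpace G]
    (hm : Measurable fun p : G × G => p.1 * p.2)
    (μ : Measure G) [IsProbabilityMeasure μ] [μ.Regular]
    (hidem : Measure.map (fun p : G × G => p.1 * p.2) (μ.prod μ) = μ) :
    ∃ H : Subgroup G, IsClosed (H : Set G) ∧ measSupport μ = (H : Set G) ∧
      ∀ h ∈ H, Measure.map (fun x => h * x) μ = μ :=
  stmt_17_general hm μ hidem
end

section
/- Let v ∈ ℝⁿ have coordinates linearly independent over ℚ, equivalently ⟨v,x⟩ ≠ 0 for every nonzero x ∈ ℤⁿ, and set S_v = {x ∈ ℤⁿ : ⟨v,x⟩ ≥ 0}. Then S_v is a subsemigroup of ℤⁿ with S_v ∪ (−S_v) = ℤⁿ and S_v ∩ (−S_v) = {0}, and the only subsets P ⊆ S_v such that P is a subsemigroup and S_v ∖ P is a semigroup ideal of S_v are P = S_v and P = {0}. -/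
/-- Let `v ∈ ℝⁿ` satisfy `⟨v,x⟩ ≠ 0` for all nonzero `x ∈ ℤⁿ`, and let
`S_v = {x ∈ ℤⁿ : ⟨v,x⟩ ≥ 0}`.  Then `S_v` is a subsemigroup of `ℤⁿ` containing `0` with
`S_v ∪ (−S_v) = ℤⁿ` and `S_v ∩ (−S_v) = {0}`, and the only faces of `S_v` (subsemigroups `P`
containing `0` whose complement `S_v ∖ P` is a semigroup ideal) are `{0}` and `S_v`. -/
theorem stmt_18 {n : ℕ} (v : Fin n → ℝ)
    (hv : ∀ x : Fin n → ℤ, x ≠ 0 → (∑ j, v j * (x j : ℝ)) ≠ 0) :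
    let Sv : Set (Fin n → ℤ) := {x | 0 ≤ ∑ j, v j * (x j : ℝ)}
    ((0 : Fin n → ℤ) ∈ Sv ∧ ∀ x ∈ Sv, ∀ y ∈ Sv, x + y ∈ Sv) ∧
    (Sv ∪ (-Sv) = Set.univ) ∧
    (Sv ∩ (-Sv) = {0}) ∧
    ∀ P ⊆ Sv, (0 : Fin n → ℤ) ∈ P → (∀ x ∈ P, ∀ y ∈ P, x + y ∈ P) →
      (∀ x ∈ Sv, ∀ y ∈ Sv, y ∉ P → x + y ∉ P) →
      P = {0} ∨ P = Sv := by
  intro Sv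
  set f : (Fin n → ℤ) → ℝ := fun x => ∑ j, v j * (x j : ℝ) with hf
  have hadd : ∀ x y : Fin n → ℤ, f (x + y) = f x + f y := by
    intro x y
    simp [hf, Pi.add_apply, mul_add, Finset.sum_add_distrib]
  have hneg : ∀ x : Fin n → ℤ, f (-x) = - f x := by
    intro x
    simp [hf, Pi.neg_apply]
  have hsmul : ∀ (k : ℕ) (x : Fin n → ℤ), f (k • x) = k * f x := by
    intro k x
    induction k with
    | zero => simp [hf]
    | succ k ih =>
      rw [succ_nsmul, hadd, ih]
      push_cast; ring
  have hmemSv : ∀ x : Fin n → ℤ, x ∈ Sv ↔ 0 ≤ f x := fun x => Iff.rfl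
  have h0 : (0 : Fin n → ℤ) ∈ Sv := by
    rw [hmemSv]; simp [hf]
  refine ⟨⟨h0, ?_⟩, ?_, ?_, ?_⟩
  · intro x hx y hy
    rw [hmemSv] at *
    rw [hadd]; linarith
  · ext x
    simp only [Set.mem_union, Set.mem_univ, iff_true, Set.mem_neg]
    rw [hmemSv, hmemSv, hneg]
    rcases le_total 0 (f x) with h | h
    · exact Or.inl h
    · exact Or.inr (by linarith)
  · ext x
    simp only [Set.mem_inter_iff, Set.mem_neg, Set.mem_singleton_iff]
    rw [hmemSv, hmemSv, hneg]
    constructor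
    · rintro ⟨h1, h2⟩
      by_contra hx
      exact hv x hx (le_antisymm (by linarith) h1)
    · rintro rfl; simp [hf]
  · intro P hPS hP0 hPadd hPideal
    by_cases hP : P = {0}
    · exact Or.inl hP
    · right
      obtain ⟨p, hp, hpne⟩ : ∃ p ∈ P, p ≠ 0 := by
        by_contra h
        push_neg at h
        apply hP
        ext x
        simp only [Set.mem_singleton_iff]
        exact ⟨fun hx => h x hx, fun hx => hx ▸ hP0⟩
      have hfp : 0 < f p := lt_of_le_of_ne ((hmemSv p).mp (hPS hp)) (Ne.symm (hv p hpne))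
      have hkp : ∀ k : ℕ, k • p ∈ P := by
        intro k
        induction k with
        | zero => simpa using hP0
        | succ k ih => rw [succ_nsmul]; exact hPadd _ ih _ hp
      ext x
      constructor
      · exact fun hx => hPS hx
      · intro hx
        obtain ⟨k, hk⟩ := exists_nat_ge (f x / f p)
        have hle : f x ≤ k * f p := by
          rw [div_le_iff₀ hfp] at hk; linarith
        have hy : k • p - x ∈ Sv := by
          rw [hmemSv]
          have : f (k • p - x) = k * f p - f x := by
            rw [sub_eq_add_neg, hadd, hneg, hsmul]; ring
          linarith [this]
        by_contra hxP
        have := hPideal _ hy _ hx hxP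
        rw [sub_add_cancel] at this
        exact this (hkp k)
end

section
/- Let H be a complex Hilbert space and 𝔖 ⊆ BL(H) a semigroup of bounded operators, closed under adjoints, with all operators of norm ≤ 1. Let {R_j}_{j∈J} ⊆ 𝔖 be a family of orthogonal projections, let L = ⋂_{j∈J} R_j H, and suppose N ⊆ H is a finite-dimensional subspace invariant under 𝔖 with N ∩ L = {0}. Then there exist finitely many indices j_1,…,j_m ∈ J such that, setting T = R_{j_1}⋯R_{j_m}, the self-adjoint operator S = T*T restricted to N has all eigenvalues strictly less than 1; consequently Sⁿf → 0 for every f ∈ N. -/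
/-!
An orthogonal projection `p` satisfies `‖p x‖ ≤ ‖x‖`, with equality only when `p x = x`; hence a
product of orthogonal projections strictly shrinks every vector moved by one of its factors.
Subspaces of the finite-dimensional `N` satisfy the descending chain condition, so finitely many
`R j` already have no common nonzero fixed vector in `N`. For `T` their product,
`T* T = R_{j_m} ⋯ R_{j_1} R_{j_1} ⋯ R_{j_m}` is again such a product, so `‖S f‖ < ‖f‖` on
`N ∖ {0}`. By compactness of the unit sphere of `N`, the restriction of `S` to the invariant
subspace `N` then has norm `< 1`, which bounds the eigenvalues and forces `Sⁿ f → 0`.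
-/

open Filter Topology

theorem exists_finset_biInf_eq_iInf {α ι : Type*} [CompleteLattice α] [WellFoundedLT α]
    (f : ι → α) : ∃ s : Finset ι, ⨅ i ∈ s, f i = ⨅ i, f i := by
  classical
  obtain ⟨_, ⟨s, rfl⟩, hmin⟩ :=
    wellFounded_lt.has_min (Set.range fun s : Finset ι => ⨅ i ∈ s, f i) ⟨_, ∅, rfl⟩
  refine ⟨s, le_antisymm (le_iInf fun j => ?_) (le_iInf₂ fun i _ => iInf_le f i)⟩
  have hinsert : ⨅ i ∈ insert j s, f i = ⨅ i ∈ s, f i :=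
    eq_of_le_of_not_lt (biInf_mono fun _ => Finset.mem_insert_of_mem) (hmin _ ⟨_, rfl⟩)
  exact hinsert ▸ iInf₂_le j (Finset.mem_insert_self j s)

theorem Submodule.exists_finset_forall_eq_zero {𝕜 E ι : Type*} [DivisionRing 𝕜] [AddCommGroup E]
    [Module 𝕜 E] (N : Submodule 𝕜 E) [FiniteDimensional 𝕜 N] (V : ι → Submodule 𝕜 E)
    (h : ∀ x ∈ N, (∀ i, x ∈ V i) → x = 0) :
    ∃ s : Finset ι, ∀ x ∈ N, (∀ i ∈ s, x ∈ V i) → x = 0 := by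
  obtain ⟨s, hs⟩ := exists_finset_biInf_eq_iInf fun i => (V i).comap N.subtype
  refine ⟨s, fun x hx hxs => h x hx fun i => ?_⟩
  have hx' : (⟨x, hx⟩ : N) ∈ ⨅ i ∈ s, (V i).comap N.subtype := by
    simpa [Submodule.mem_iInf] using hxs
  rw [hs, Submodule.mem_iInf] at hx'
  exact hx' i

theorem star_list_prod_of_forall_isSelfAdjoint {R : Type*} [Monoid R] [StarMul R] {l : List R}
    (hl : ∀ a ∈ l, IsSelfAdjoint a) : star l.prod = l.reverse.prod := by
  induction l with
  | nil => simp
  | cons a l ih =>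
    rw [List.forall_mem_cons] at hl
    simp [star_mul, ih hl.2, hl.1.star_eq]

section

variable {R M : Type*} [Semiring R] [TopologicalSpace M] [AddCommMonoid M] [Module R M]

theorem List.prod_apply_eq_self {l : List (M →L[R] M)} {x : M} (h : ∀ p ∈ l, p x = x) :
    l.prod x = x := by
  induction l with
  | nil => rfl
  | cons p l ih =>
    rw [List.forall_mem_cons] at h
    rw [List.prod_cons, mul_apply_eq_comp, ih h.2, h.1]

theorem List.prod_apply_mem {l : List (M →L[R] M)} {N : Submodule R M}
    (h : ∀ p ∈ l, ∀ x ∈ N, p x ∈ N) {x : M} (hx : x ∈ N) : l.prod x ∈ N := by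
  induction l with
  | nil => exact hx
  | cons p l ih =>
    rw [List.forall_mem_cons] at h
    rw [List.prod_cons, mul_apply_eq_comp]
    exact h.1 _ (ih h.2)

end

section

variable {𝕜 E : Type*} [RCLike 𝕜] [NormedAddCommGroup E] [InnerProductSpace 𝕜 E] [CompleteSpace E]

theorem IsStarProjection.norm_apply_le {p : E →L[𝕜] E} (hp : IsStarProjection p) (x : E) :
    ‖p x‖ ≤ ‖x‖ :=
  (p.le_of_opNorm_le (hp.norm_le p) x).trans_eq (one_mul _)

theorem IsStarProjection.apply_eq_self_of_norm_apply_eq {p : E →L[𝕜] E} (hp : IsStarProjection p)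
    {x : E} (h : ‖p x‖ = ‖x‖) : p x = x := by
  obtain ⟨K, _, rfl⟩ := isStarProjection_iff_eq_starProjection.mp hp
  exact K.starProjection_eq_self_iff.mpr ((K.mem_iff_norm_starProjection x).mpr h)

variable {l : List (E →L[𝕜] E)}

theorem norm_list_prod_apply_le (hl : ∀ p ∈ l, IsStarProjection p) (x : E) :
    ‖l.prod x‖ ≤ ‖x‖ := by
  induction l with
  | nil => rfl
  | cons p l ih =>
    rw [List.forall_mem_cons] at hl
    rw [List.prod_cons, mul_apply_eq_comp]
    exact (hl.1.norm_apply_le _).trans (ih hl.2)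

theorem forall_apply_eq_self_of_norm_list_prod_apply_eq (hl : ∀ p ∈ l, IsStarProjection p)
    {x : E} (h : ‖l.prod x‖ = ‖x‖) : ∀ p ∈ l, p x = x := by
  induction l with
  | nil => simp
  | cons p l ih =>
    rw [List.forall_mem_cons] at hl
    rw [List.prod_cons, mul_apply_eq_comp] at h
    have htail : ∀ q ∈ l, q x = x :=
      ih hl.2 <| le_antisymm (norm_list_prod_apply_le hl.2 x) (h ▸ hl.1.norm_apply_le _)
    rw [List.prod_apply_eq_self htail] at h
    exact List.forall_mem_cons.mpr ⟨hl.1.apply_eq_self_of_norm_apply_eq h, htail⟩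

theorem norm_list_prod_apply_lt (hl : ∀ p ∈ l, IsStarProjection p) {x : E}
    (h : ∃ p ∈ l, p x ≠ x) : ‖l.prod x‖ < ‖x‖ := by
  obtain ⟨p, hpl, hpx⟩ := h
  exact (norm_list_prod_apply_le hl x).lt_of_ne
    fun heq => hpx (forall_apply_eq_self_of_norm_list_prod_apply_eq hl heq p hpl)

theorem adjoint_list_prod_mul_self (hl : ∀ p ∈ l, IsStarProjection p) :
    ContinuousLinearMap.adjoint l.prod * l.prod = (l.reverse ++ l).prod := by
  rw [← ContinuousLinearMap.star_eq_adjoint,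
    star_list_prod_of_forall_isSelfAdjoint fun p hp => (hl p hp).isSelfAdjoint, List.prod_append]

end

theorem ContinuousLinearMap.opNorm_lt_one_of_norm_apply_lt {𝕜 E F : Type*} [RCLike 𝕜]
    [NormedAddCommGroup E] [NormedSpace 𝕜 E] [FiniteDimensional 𝕜 E] [SeminormedAddCommGroup F]
    [NormedSpace 𝕜 F] (f : E →L[𝕜] F) (hf : ∀ x ≠ 0, ‖f x‖ < ‖x‖) : ‖f‖ < 1 := by
  rcases subsingleton_or_nontrivial E with _ | _
  · simp [opNorm_subsingleton]
  have := FiniteDimensional.proper_rclike 𝕜 E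
  obtain ⟨x₀, hx₀, hmax⟩ := (isCompact_sphere (0 : E) 1).exists_isMaxOn
    (Set.nonempty_coe_sort.mp (NormedSpace.sphere_nonempty_rclike 𝕜 zero_le_one))
    (by fun_prop : Continuous fun x => ‖f x‖).continuousOn
  rw [mem_sphere_zero_iff_norm] at hx₀
  calc ‖f‖ ≤ ‖f x₀‖ :=
        opNorm_le_of_unit_norm (norm_nonneg _) fun x hx => hmax (mem_sphere_zero_iff_norm.mpr hx)
    _ < 1 := hx₀ ▸ hf x₀ (norm_ne_zero_iff.mp (by simp [hx₀]))

theorem ContinuousLinearMap.tendsto_pow_apply_nhds_zero_of_norm_apply_lt {𝕜 E : Type*} [RCLike 𝕜]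
    [NormedAddCommGroup E] [NormedSpace 𝕜 E] (S : E →L[𝕜] E) (N : Submodule 𝕜 E)
    [FiniteDimensional 𝕜 N] (hN : ∀ x ∈ N, S x ∈ N) (hS : ∀ x ∈ N, x ≠ 0 → ‖S x‖ < ‖x‖)
    {x : E} (hx : x ∈ N) : Tendsto (fun n => (S ^ n) x) atTop (𝓝 0) := by
  set S' : N →L[𝕜] N := S.restrict hN
  have hS' : ‖S'‖ < 1 :=
    S'.opNorm_lt_one_of_norm_apply_lt fun y hy => hS y y.2 (by simpa using hy)
  have hpow : ∀ n, ((S' ^ n) ⟨x, hx⟩ : E) = (S ^ n) x := by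
    intro n
    induction n with
    | zero => rfl
    | succ n ih =>
      rw [pow_succ', pow_succ', mul_apply_eq_comp, mul_apply_eq_comp, coe_restrict_apply, ih]
  have := ((continuous_subtype_val.comp (continuous_eval_const (⟨x, hx⟩ : N))).tendsto 0).comp
    (tendsto_pow_atTop_nhds_zero_of_norm_lt_one hS')
  simpa only [Function.comp_def, hpow, zero_apply, ZeroMemClass.coe_zero] using this

theorem stmt_19_general {H : Type*} [NormedAddCommGroup H] [InnerProductSpace ℂ H] [CompleteSpace H]
    (𝔖 : Set (H →L[ℂ] H))
    {J : Type*} (R : J → (H →L[ℂ] H))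
    (hRmem : ∀ j, R j ∈ 𝔖)
    (hRproj : ∀ j, R j * R j = R j ∧ ContinuousLinearMap.adjoint (R j) = R j)
    (N : Submodule ℂ H) [FiniteDimensional ℂ N]
    (hNinv : ∀ a ∈ 𝔖, ∀ f ∈ N, a f ∈ N)
    (hNL : ∀ f ∈ N, (∀ j, R j f = f) → f = 0) :
    ∃ (m : ℕ) (js : Fin m → J),
      let T := (List.ofFn fun k => R (js k)).prod
      let S := ContinuousLinearMap.adjoint T * T
      (∀ (c : ℂ) (f : H), f ∈ N → f ≠ 0 → S f = c • f → ‖c‖ < 1) ∧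
      ∀ f ∈ N, Filter.Tendsto (fun p : ℕ => (S ^ p) f) Filter.atTop (nhds 0) := by
  obtain ⟨s, hs⟩ :=
    N.exists_finset_forall_eq_zero (fun j => LinearMap.eqLocus (R j : H →ₗ[ℂ] H) LinearMap.id) hNL
  refine ⟨s.toList.length, s.toList.get, ?_⟩
  set l := s.toList.map R
  have hT : (List.ofFn fun k => R (s.toList.get k)) = l := List.ext_get (by simp [l]) (by simp [l])
  have hl : ∀ p ∈ l, IsStarProjection p := by
    simp only [l, List.mem_map]
    rintro _ ⟨j, -, rfl⟩
    exact ⟨(hRproj j).1, ContinuousLinearMap.isSelfAdjoint_iff'.mpr (hRproj j).2⟩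
  have hl_inv : ∀ p ∈ l, ∀ f ∈ N, p f ∈ N := by
    simp only [l, List.mem_map]
    rintro _ ⟨j, -, rfl⟩
    exact hNinv _ (hRmem j)
  simp only [hT, adjoint_list_prod_mul_self hl]
  have hS_lt : ∀ f ∈ N, f ≠ 0 → ‖(l.reverse ++ l).prod f‖ < ‖f‖ := by
    intro f hf hf0
    obtain ⟨j, hj, hjf⟩ : ∃ j ∈ s, R j f ≠ f := by
      by_contra! h
      exact hf0 (hs f hf h)
    exact norm_list_prod_apply_lt (fun p hp => hl p (by simpa using hp))
      ⟨R j, List.mem_append_right _ (List.mem_map_of_mem (Finset.mem_toList.mpr hj)), hjf⟩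
  have hS_mem : ∀ f ∈ N, (l.reverse ++ l).prod f ∈ N :=
    fun f => List.prod_apply_mem fun p hp => hl_inv p (by simpa using hp)
  refine ⟨fun c f hf hf0 hSf => ?_, fun f hf => ?_⟩
  · have := hS_lt f hf hf0
    rwa [hSf, norm_smul, mul_lt_iff_lt_one_left (norm_pos_iff.mpr hf0)] at this
  · exact ContinuousLinearMap.tendsto_pow_apply_nhds_zero_of_norm_apply_lt _ N hS_mem hS_lt hf

/-- Let `𝔖` be a self-adjoint semigroup of contractions on a Hilbert space `H`, `{R_j}` a
family of orthogonal projections in `𝔖` with `L = ⋂_j R_j H`, and `N` a finite-dimensional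
`𝔖`-invariant subspace with `N ∩ L = {0}`.  Then some finite product `T = R_{j₁} ⋯ R_{jₘ}`
gives a self-adjoint operator `S = T*T` all of whose eigenvalues on `N` are `< 1`, and
consequently `Sⁿ f → 0` for every `f ∈ N`. -/
theorem stmt_19 {H : Type*} [NormedAddCommGroup H] [InnerProductSpace ℂ H] [CompleteSpace H]
    (𝔖 : Set (H →L[ℂ] H))
    (hcomp : ∀ a ∈ 𝔖, ∀ b ∈ 𝔖, a * b ∈ 𝔖)
    (hadj : ∀ a ∈ 𝔖, ContinuousLinearMap.adjoint a ∈ 𝔖)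
    (hnorm : ∀ a ∈ 𝔖, ‖a‖ ≤ 1)
    {J : Type*} (R : J → (H →L[ℂ] H))
    (hRmem : ∀ j, R j ∈ 𝔖)
    (hRproj : ∀ j, R j * R j = R j ∧ ContinuousLinearMap.adjoint (R j) = R j)
    (N : Submodule ℂ H) [FiniteDimensional ℂ N]
    (hNinv : ∀ a ∈ 𝔖, ∀ f ∈ N, a f ∈ N)
    (hNL : ∀ f ∈ N, (∀ j, R j f = f) → f = 0) :
    ∃ (m : ℕ) (js : Fin m → J),
      let T := (List.ofFn fun k => R (js k)).prod
      let S := ContinuousLinearMap.adjoint T * T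
      (∀ (c : ℂ) (f : H), f ∈ N → f ≠ 0 → S f = c • f → ‖c‖ < 1) ∧
      ∀ f ∈ N, Filter.Tendsto (fun p : ℕ => (S ^ p) f) Filter.atTop (nhds 0) :=
  stmt_19_general 𝔖 R hRmem hRproj N hNinv hNL
end
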